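/- arXiv:2002.05125 — 4 statements merged into one kernel-verified Lean document; each statement's English description precedes it below -/
import Mathlib

section
/- There exists a sequence of real numbers (c_n) such that for every natural number q, the series ∑_{j=0}^∞ c_j·(-2^j)^q converges to 1, and for every natural number q, the series ∑_{j=0}^∞ |c_j|·(2^j)^q converges (is finite). -/
/-!
With nodes `x_j = -2^j`, the value at `1` of the Lagrange basis polynomial of `x_k` for the nodes
`x_0, …, x_n` is `L_n(k) = ∏_{j ≤ n, j ≠ k} (1 - x_j) / (x_k - x_j)`, and exactness of Lagrange
interpolation on `X^q` gives `∑_{k ≤ n} L_n(k) x_k^q = 1` for `q ≤ n`. The factors with `j > k`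
are `1 + O(2^{k-j})`, so `L_n(k)` converges to the infinite product `c_k` as `n → ∞` and
`|L_n(k)| ≤ e^4 ∏_{j<k} 4 / 2^{k-j}` uniformly in `n`. This bound decays like `2^{-k²/2}`, which
beats every `2^{kq}`: it dominates the sums, so the identity passes to the limit (Tannery) and
gives the absolute moment bounds.
-/

open Finset Filter Topology Polynomial

namespace Lagrange

variable {F ι : Type*} [Field F] [DecidableEq ι] {s : Finset ι} {v : ι → F}

theorem eval_basis_eq_prod (i : ι) (t : F) :
    (Lagrange.basis s v i).eval t = ∏ j ∈ s.erase i, (t - v j) / (v i - v j) := by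
  simp only [Lagrange.basis, basisDivisor, eval_prod, eval_mul, eval_C, eval_sub, eval_X,
    inv_mul_eq_div]

theorem sum_pow_mul_eval_basis (hv : Set.InjOn v s) {q : ℕ} (hq : q < #s) (t : F) :
    ∑ i ∈ s, v i ^ q * (Lagrange.basis s v i).eval t = t ^ q := by
  have hdeg : ((X : F[X]) ^ q).degree < #s := by
    rw [degree_X_pow]; exact_mod_cast hq
  have := congrArg (eval t) (eq_interpolate hv hdeg)
  simp only [interpolate_apply, eval_pow, eval_X, eval_finsetSum, eval_mul, eval_C] at this
  rw [this]

end Lagrange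

theorem Finset.prod_range_erase_add {M : Type*} [CommMonoid M] (f : ℕ → M) (k m : ℕ) :
    ∏ j ∈ (range (k + m + 1)).erase k, f j =
      (∏ j ∈ range k, f j) * ∏ i ∈ range m, f (k + 1 + i) := by
  have hsplit : (range (k + m + 1)).erase k = range k ∪ Ico (k + 1) (k + 1 + m) := by
    ext j; simp only [mem_erase, mem_range, mem_union, mem_Ico]; omega
  have hdisj : Disjoint (range k) (Ico (k + 1) (k + 1 + m)) := by
    rw [disjoint_left]; intro j; simp only [mem_range, mem_Ico]; omega
  rw [hsplit, prod_union hdisj, prod_Ico_eq_prod_range, Nat.add_sub_cancel_left]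

theorem hasSum_of_tendsto_sum_range {E : Type*} [NormedAddCommGroup E] [CompleteSpace E]
    {f : ℕ → ℕ → E} {g : ℕ → E} {bound : ℕ → ℝ} {a : E} (h_sum : Summable bound)
    (h_lim : ∀ k, Tendsto (f · k) atTop (𝓝 (g k))) (h_bound : ∀ n, ∀ k ≤ n, ‖f n k‖ ≤ bound k)
    (h_eq : ∀ᶠ n in atTop, ∑ k ∈ range (n + 1), f n k = a) : HasSum g a := by
  set F : ℕ → ℕ → E := fun n k => if k ≤ n then f n k else 0
  have hF_lim (k : ℕ) : Tendsto (F · k) atTop (𝓝 (g k)) :=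
    (h_lim k).congr' <| (eventually_ge_atTop k).mono fun n hn => (if_pos hn).symm
  have hF_bound : ∀ᶠ n in atTop, ∀ k, ‖F n k‖ ≤ bound k := by
    refine Eventually.of_forall fun n k => ?_
    by_cases hk : k ≤ n
    · simpa only [F, if_pos hk] using h_bound n k hk
    · simpa only [F, if_neg hk, norm_zero] using (norm_nonneg _).trans (h_bound k k le_rfl)
  have hF_sum : ∀ n, ∑' k, F n k = ∑ k ∈ range (n + 1), f n k := by
    intro n
    rw [tsum_eq_sum (s := range (n + 1)) fun k hk => if_neg (by simpa [Nat.lt_succ_iff] using hk)]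
    exact sum_congr rfl fun k hk => if_pos (Nat.lt_succ_iff.mp (mem_range.mp hk))
  have h_tendsto := tendsto_tsum_of_dominated_convergence h_sum hF_lim hF_bound
  have hg : Summable g := h_sum.of_norm_bounded fun k =>
    le_of_tendsto (hF_lim k).norm (hF_bound.mono fun n h => h k)
  have : ∑' k, g k = a :=
    tendsto_nhds_unique h_tendsto <| tendsto_const_nhds.congr' <|
      h_eq.mono fun n h => ((hF_sum n).trans h).symm
  exact this ▸ hg.hasSum

noncomputable def seeleyNode (j : ℕ) : ℝ := -2 ^ j

noncomputable def seeleyFactor (k j : ℕ) : ℝ := (1 - seeleyNode j) / (seeleyNode k - seeleyNode j)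

noncomputable def seeleyHead (k : ℕ) : ℝ := ∏ j ∈ range k, seeleyFactor k j

noncomputable def seeleyTail (k m : ℕ) : ℝ := ∏ i ∈ range m, seeleyFactor k (k + 1 + i)

/-- The infinite product `∏_{j ≠ k} (1 + 2^j) / (2^j - 2^k)`; the partial products of its tail
increase and are bounded, so their supremum is their limit. -/
noncomputable def seeleyCoeff (k : ℕ) : ℝ := seeleyHead k * ⨆ m, seeleyTail k m

noncomputable def seeleyHeadBound (k : ℕ) : ℝ := ∏ j ∈ range k, 4 / 2 ^ (k - j)

theorem seeleyFactor_eq (k j : ℕ) : seeleyFactor k j = (1 + 2 ^ j) / (2 ^ j - 2 ^ k) := by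
  simp only [seeleyFactor, seeleyNode, sub_neg_eq_add, neg_add_eq_sub]

theorem seeleyNode_injective : Function.Injective seeleyNode := fun a b h => by
  simpa [seeleyNode] using h

theorem abs_seeleyNode_pow (k q : ℕ) : |seeleyNode k ^ q| = ((2:ℝ) ^ k) ^ q := by
  rw [abs_pow, seeleyNode, abs_neg, abs_of_pos (by positivity)]

theorem sum_seeleyNode_pow_mul_eval_basis {n q : ℕ} (hq : q ≤ n) :
    ∑ k ∈ range (n + 1), seeleyNode k ^ q * (Lagrange.basis (range (n + 1)) seeleyNode k).eval 1
      = 1 := by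
  rw [Lagrange.sum_pow_mul_eval_basis seeleyNode_injective.injOn (by simpa [Nat.lt_succ_iff]),
    one_pow]

theorem eval_basis_seeleyNode (k m : ℕ) :
    (Lagrange.basis (range (k + m + 1)) seeleyNode k).eval 1 = seeleyHead k * seeleyTail k m := by
  rw [Lagrange.eval_basis_eq_prod, prod_range_erase_add]
  rfl

theorem abs_seeleyFactor_le_of_lt {j k : ℕ} (h : j < k) :
    |seeleyFactor k j| ≤ 4 / 2 ^ (k - j) := by
  obtain ⟨d, rfl⟩ := Nat.exists_eq_add_of_lt h
  have ha : (1:ℝ) ≤ 2 ^ j := one_le_pow₀ (by norm_num)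
  have hp : (2:ℝ) ≤ 2 ^ (d + 1) := le_self_pow₀ (by norm_num) (by omega)
  set a : ℝ := 2 ^ j
  set p : ℝ := 2 ^ (d + 1)
  have hk : (2:ℝ) ^ (j + d + 1) = a * p := by rw [add_assoc, pow_add]
  have hden : 0 < a * p - a := by nlinarith
  rw [seeleyFactor_eq, hk, show j + d + 1 - j = d + 1 by omega, abs_div,
    abs_of_pos (by positivity), abs_of_neg (by linarith), neg_sub,
    div_le_div_iff₀ hden (by positivity)]
  nlinarith [mul_nonneg (sub_nonneg.mpr ha) (sub_nonneg.mpr hp)]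

theorem abs_seeleyHead_le (k : ℕ) : |seeleyHead k| ≤ seeleyHeadBound k := by
  rw [seeleyHead, abs_prod]
  exact prod_le_prod (fun _ _ => abs_nonneg _)
    fun j hj => abs_seeleyFactor_le_of_lt (mem_range.mp hj)

theorem seeleyHeadBound_succ (k : ℕ) :
    seeleyHeadBound (k + 1) = seeleyHeadBound k * (4 / 2 ^ (k + 1)) := by
  simp only [seeleyHeadBound, prod_range_succ', Nat.add_sub_add_right, Nat.sub_zero]

theorem seeleyHeadBound_pos (k : ℕ) : 0 < seeleyHeadBound k :=
  prod_pos fun _ _ => by positivity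

theorem summable_seeleyHeadBound_mul_pow (q : ℕ) :
    Summable fun k => seeleyHeadBound k * ((2:ℝ) ^ k) ^ q := by
  have hpos (k : ℕ) : 0 < seeleyHeadBound k * ((2:ℝ) ^ k) ^ q :=
    mul_pos (seeleyHeadBound_pos k) (by positivity)
  refine summable_of_ratio_test_tendsto_lt_one zero_lt_one
    (Eventually.of_forall fun k => (hpos k).ne') ?_
  have hratio (k : ℕ) : ‖seeleyHeadBound (k + 1) * ((2:ℝ) ^ (k + 1)) ^ q‖ /
      ‖seeleyHeadBound k * ((2:ℝ) ^ k) ^ q‖ = 2 * 2 ^ q * (1 / 2) ^ k := by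
    rw [Real.norm_of_nonneg (hpos _).le, Real.norm_of_nonneg (hpos _).le, seeleyHeadBound_succ,
      div_eq_iff (hpos k).ne', one_div, inv_pow]
    field_simp
    ring
  simp only [hratio]
  simpa using (tendsto_pow_atTop_nhds_zero_of_lt_one (by norm_num : (0:ℝ) ≤ 1 / 2)
    (by norm_num)).const_mul (2 * 2 ^ q)

theorem seeleyFactor_add_mem_Icc (k i : ℕ) :
    seeleyFactor k (k + 1 + i) ∈ Set.Icc 1 (1 + 2 * (1 / 2) ^ i) := by
  rw [seeleyFactor_eq, one_div, inv_pow, pow_add, pow_succ]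
  have ha : (1:ℝ) ≤ 2 ^ k := one_le_pow₀ (by norm_num)
  have hp : (1:ℝ) ≤ 2 ^ i := one_le_pow₀ (by norm_num)
  set a : ℝ := 2 ^ k
  set p : ℝ := 2 ^ i
  have hden : 0 < a * 2 * p - a := by nlinarith
  constructor
  · rw [le_div_iff₀ hden]; nlinarith
  · rw [div_le_iff₀ hden]
    field_simp
    nlinarith [mul_nonneg (sub_nonneg.mpr ha) (sub_nonneg.mpr hp)]

theorem one_le_seeleyTail (k m : ℕ) : 1 ≤ seeleyTail k m :=
  one_le_prod fun i _ => (seeleyFactor_add_mem_Icc k i).1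

theorem seeleyTail_le_exp (k m : ℕ) : seeleyTail k m ≤ Real.exp 4 := by
  calc seeleyTail k m ≤ ∏ i ∈ range m, (1 + 2 * (1 / 2 : ℝ) ^ i) :=
        prod_le_prod (fun i _ => zero_le_one.trans (seeleyFactor_add_mem_Icc k i).1)
          fun i _ => (seeleyFactor_add_mem_Icc k i).2
    _ ≤ Real.exp (∑ i ∈ range m, 2 * (1 / 2 : ℝ) ^ i) :=
        Real.prod_one_add_le_exp_sum _ fun i => by positivity
    _ ≤ Real.exp 4 := by
        rw [Real.exp_le_exp, ← mul_sum]
        linarith [sum_geometric_two_le m]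

theorem monotone_seeleyTail (k : ℕ) : Monotone (seeleyTail k) :=
  monotone_nat_of_le_succ fun m => by
    rw [seeleyTail, seeleyTail, prod_range_succ]
    exact le_mul_of_one_le_right (zero_le_one.trans (one_le_seeleyTail k m))
      (seeleyFactor_add_mem_Icc k m).1

theorem tendsto_eval_basis_seeleyNode (k : ℕ) :
    Tendsto (fun n => (Lagrange.basis (range (n + 1)) seeleyNode k).eval 1) atTop
      (𝓝 (seeleyCoeff k)) := by
  have h_tail : Tendsto (seeleyTail k) atTop (𝓝 (⨆ m, seeleyTail k m)) :=
    tendsto_atTop_ciSup (monotone_seeleyTail k) ⟨Real.exp 4, by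
      rintro _ ⟨m, rfl⟩; exact seeleyTail_le_exp k m⟩
  refine (tendsto_add_atTop_iff_nat k).mp ?_
  simpa only [add_comm _ k, eval_basis_seeleyNode, seeleyCoeff] using
    h_tail.const_mul (seeleyHead k)

theorem abs_eval_basis_seeleyNode_le {k n : ℕ} (h : k ≤ n) :
    |(Lagrange.basis (range (n + 1)) seeleyNode k).eval 1| ≤ Real.exp 4 * seeleyHeadBound k := by
  obtain ⟨m, rfl⟩ := Nat.exists_eq_add_of_le h
  rw [eval_basis_seeleyNode, abs_mul, abs_of_pos (zero_lt_one.trans_le (one_le_seeleyTail k m)),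
    mul_comm (Real.exp 4)]
  exact mul_le_mul (abs_seeleyHead_le k) (seeleyTail_le_exp k m)
    (zero_le_one.trans (one_le_seeleyTail k m)) (seeleyHeadBound_pos k).le

theorem abs_seeleyCoeff_le (k : ℕ) : |seeleyCoeff k| ≤ Real.exp 4 * seeleyHeadBound k :=
  le_of_tendsto (tendsto_eval_basis_seeleyNode k).abs <|
    (eventually_ge_atTop k).mono fun _ => abs_eval_basis_seeleyNode_le

theorem hasSum_seeleyCoeff_mul_seeleyNode_pow (q : ℕ) :
    HasSum (fun k => seeleyCoeff k * seeleyNode k ^ q) 1 := by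
  refine hasSum_of_tendsto_sum_range (bound := fun k => Real.exp 4 * seeleyHeadBound k *
      ((2:ℝ) ^ k) ^ q) (f := fun n k => (Lagrange.basis (range (n + 1)) seeleyNode k).eval 1 *
      seeleyNode k ^ q)
    ?_ (fun k => (tendsto_eval_basis_seeleyNode k).mul_const _) (fun n k hk => ?_) ?_
  · simpa only [mul_assoc] using (summable_seeleyHeadBound_mul_pow q).mul_left (Real.exp 4)
  · rw [Real.norm_eq_abs, abs_mul, abs_seeleyNode_pow]
    exact mul_le_mul_of_nonneg_right (abs_eval_basis_seeleyNode_le hk) (by positivity)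
  · filter_upwards [eventually_ge_atTop q] with n hn
    simpa only [mul_comm] using sum_seeleyNode_pow_mul_eval_basis hn

theorem summable_abs_seeleyCoeff_mul_pow (q : ℕ) :
    Summable fun k => |seeleyCoeff k| * ((2:ℝ) ^ k) ^ q :=
  .of_nonneg_of_le (fun _ => by positivity)
    (fun k => mul_le_mul_of_nonneg_right (abs_seeleyCoeff_le k) (by positivity))
    ((summable_seeleyHeadBound_mul_pow q).mul_left (Real.exp 4) |>.congr fun _ => by ring)

/-- The Seeley sequence: there is a sequence `(cₙ)` of reals such that
`∑ⱼ cⱼ·(-2ʲ)^q = 1` for every `q ∈ ℕ`, and `∑ⱼ |cⱼ|·(2ʲ)^q < ∞` for every `q ∈ ℕ`. -/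
theorem seeley_sequence :
    ∃ c : ℕ → ℝ,
      (∀ q : ℕ, HasSum (fun j : ℕ => c j * (-(2:ℝ) ^ j) ^ q) 1) ∧
      (∀ q : ℕ, Summable (fun j : ℕ => |c j| * ((2:ℝ) ^ j) ^ q)) :=
  ⟨seeleyCoeff, hasSum_seeleyCoeff_mul_seeleyNode_pow, summable_abs_seeleyCoeff_mul_pow⟩
end

section
/- Let H, F be Hausdorff locally convex spaces, U ⊆ H open nonempty, A ⊆ U closed in U, and S ⊆ H with U ⊆ S. Suppose A is harmonic: for each (x,v) ∈ A × H there exist δ > 0 and a continuous path γ : [0,1] → H with γ(0) = 0 such that x + γ((0,1]) + [−δ,δ]·v ⊆ U∖A. Let f ∈ C^k(U∖A, F) (k ∈ ℕ∪{∞}), and for each 0 ≤ ℓ ≤ k let Φ^ℓ : S × H^ℓ → F be continuous with Φ^ℓ restricted to (U∖A) × H^ℓ equal to d^ℓ f. Then f̃ := Φ⁰|_U is of class C^k on U with d^ℓ f̃ = Φ^ℓ|_{U×H^ℓ} for all 0 ≤ ℓ ≤ k. -/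
/-!
Fix `x ∈ U`, `v`, and the direction `w = v ℓ`. The escape path `γ` (constant when `x ∉ A`)
gives points `x + γ s`, `s > 0`, whose segments `x + γ s + [-τ, τ] • w` lie in `U \ A`, where
`Φ (ℓ + 1)` is the directional derivative of `Φ ℓ`. Given a closed convex neighbourhood `K`
of `Φ (ℓ + 1) x v`, joint continuity of `Φ (ℓ + 1)` puts its values on these segments in `K`
for small `s` and `τ`, so by the mean value theorem the difference quotients of `Φ ℓ` along
them lie in `K`. Letting `s → 0⁺`, continuity of `Φ ℓ` and closedness of `K` put the difference
quotients at `x` itself in `K`.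
-/

open Filter Topology Set

/-- Directional (Gateaux) derivative in the Bastiani sense. -/
def HasDirDeriv {E F : Type*} [AddCommGroup E] [Module ℝ E] [TopologicalSpace E]
    [AddCommGroup F] [Module ℝ F] [TopologicalSpace F]
    (f : E → F) (x v : E) (L : F) : Prop :=
  Tendsto (fun t : ℝ => t⁻¹ • (f (x + t • v) - f x)) (𝓝[≠] (0:ℝ)) (𝓝 L)

/-- `D` is the family of iterated Bastiani differentials of `f` on `U` up to order `k`:
`D ℓ x v` represents `d^ℓ f(x; v 0, …, v (ℓ-1))`; `D (ℓ+1) x v` is the directional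
derivative of `y ↦ D ℓ y v` at `x` in direction `v ℓ`, and each `D ℓ` is jointly
continuous on `U` (so `f` is of class `C^k` in the Bastiani sense, with differentials `D`). -/
structure BastianiFamily {E F : Type*} [AddCommGroup E] [Module ℝ E] [TopologicalSpace E]
    [AddCommGroup F] [Module ℝ F] [TopologicalSpace F]
    (k : ℕ∞) (U : Set E) (f : E → F) (D : ℕ → E → (ℕ → E) → F) : Prop where
  zeroth : ∀ x v, D 0 x v = f x
  deriv : ∀ ℓ : ℕ, (ℓ : ℕ∞) < k → ∀ x ∈ U, ∀ v : ℕ → E,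
    HasDirDeriv (fun y => D ℓ y v) x (v ℓ) (D (ℓ + 1) x v)
  cont : ∀ ℓ : ℕ, (ℓ : ℕ∞) ≤ k →
    ContinuousOn (fun p : E × (ℕ → E) => D ℓ p.1 p.2) (U ×ˢ univ)

/-- A closed-in-`U` subset `A` is harmonic if from each of its points one can escape
`A` along a continuous path, stably under perturbations in any fixed direction. -/
def IsHarmonic {H : Type*} [AddCommGroup H] [Module ℝ H] [TopologicalSpace H]
    (U A : Set H) : Prop :=
  ∀ x ∈ A, ∀ v : H, ∃ δ : ℝ, 0 < δ ∧ ∃ γ : ℝ → H,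
    ContinuousOn γ (Icc 0 1) ∧ γ 0 = 0 ∧
    ∀ s ∈ Ioc (0:ℝ) 1, ∀ r ∈ Icc (-δ) δ, x + γ s + r • v ∈ U \ A

section ClosedConvex

variable {F : Type*} [AddCommGroup F] [Module ℝ F] [TopologicalSpace F]
  [IsTopologicalAddGroup F] [ContinuousSMul ℝ F] [LocallyConvexSpace ℝ F]

theorem nhds_basis_closed_convex (x : F) :
    (𝓝 x).HasBasis (fun C : Set F => C ∈ 𝓝 x ∧ Convex ℝ C ∧ IsClosed C) id := by
  refine hasBasis_self.2 fun N hN => ?_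
  obtain ⟨N₁, ⟨hN₁, hN₁closed⟩, hN₁N⟩ := (closed_nhds_basis x).mem_iff.1 hN
  obtain ⟨N₂, ⟨hN₂, hN₂conv⟩, hN₂N₁⟩ :=
    (LocallyConvexSpace.convex_basis (𝕜 := ℝ) x).mem_iff.1 hN₁
  exact ⟨closure N₂, mem_of_superset hN₂ subset_closure, ⟨hN₂conv.closure, isClosed_closure⟩,
    (closure_minimal hN₂N₁ hN₁closed).trans hN₁N⟩

/-- Tested against the continuous functionals given by Hahn–Banach, this reduces to the scalar
mean value theorem. -/
theorem slope_mem_of_tendsto_slope_mem {g : ℝ → F} {K : Set F} (hK : Convex ℝ K)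
    (hKclosed : IsClosed K) {a b : ℝ} (hab : a ≠ b) (hg : ContinuousOn g (uIcc a b))
    (hderiv : ∀ t ∈ uIoo a b, ∃ L ∈ K, Tendsto (slope g t) (𝓝[≠] t) (𝓝 L)) :
    slope g a b ∈ K := by
  wlog hlt : a < b generalizing a b
  · rw [slope_comm]
    rw [uIcc_comm] at hg
    rw [uIoo_comm] at hderiv
    exact this hab.symm hg hderiv ((Ne.lt_or_gt hab).resolve_left hlt)
  by_contra hnot
  obtain ⟨φ, u, hφK, hφu⟩ := geometric_hahn_banach_closed_point hK hKclosed hnot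
  rw [uIcc_of_lt hlt] at hg
  rw [uIoo_of_lt hlt] at hderiv
  choose! L hLK hL using hderiv
  have hφslope : ∀ s t, slope (φ ∘ g) s t = φ (slope g s t) := (φ : F →ₗ[ℝ] ℝ).slope_comp g
  have hφderiv : ∀ t ∈ Ioo a b, HasDerivAt (φ ∘ g) (φ (L t)) t := fun t ht => by
    rw [hasDerivAt_iff_tendsto_slope]
    exact ((φ.continuous.tendsto _).comp (hL t ht)).congr fun r => (hφslope t r).symm
  obtain ⟨c, hc, hφc⟩ :=
    exists_hasDerivAt_eq_slope (φ ∘ g) (φ ∘ L) hlt (φ.continuous.comp_continuousOn hg) hφderiv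
  have hφc' : φ (slope g a b) = φ (L c) := by
    rw [← hφslope, slope_def_field]
    exact hφc.symm
  linarith [hφK _ (hLK c hc), hφc']

end ClosedConvex

section DirectionalDerivative

variable {E F : Type*} [AddCommGroup E] [Module ℝ E] [TopologicalSpace E]
  [AddCommGroup F] [Module ℝ F] [TopologicalSpace F]

theorem HasDirDeriv.tendsto_slope_comp_line {g : E → F} {y w : E} {u : ℝ} {L : F}
    (h : HasDirDeriv g (y + u • w) w L) :
    Tendsto (slope (fun r => g (y + r • w)) u) (𝓝[≠] u) (𝓝 L) := by
  rw [← add_zero u, ← map_add_left_nhdsNE, tendsto_map'_iff]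
  refine h.congr fun t => ?_
  simp [slope_def_module, add_smul, add_assoc]

theorem HasDirDeriv.congr_of_eventuallyEq [ContinuousAdd E] [ContinuousSMul ℝ E]
    {f f₁ : E → F} {x v : E} {L : F}
    (h : HasDirDeriv f x v L) (hf : f₁ =ᶠ[𝓝 x] f) : HasDirDeriv f₁ x v L := by
  have hline : Tendsto (fun t : ℝ => x + t • v) (𝓝[≠] 0) (𝓝 x) := by
    have : Continuous fun t : ℝ => x + t • v := by fun_prop
    simpa using (this.tendsto 0).mono_left nhdsWithin_le_nhds
  refine h.congr' ((hline.eventually hf).mono fun t ht => ?_)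
  simp only [ht, hf.eq_of_nhds]

end DirectionalDerivative

section Escape

variable {E : Type*} [AddCommGroup E] [Module ℝ E] [TopologicalSpace E]
  [IsTopologicalAddGroup E] [ContinuousSMul ℝ E]

theorem IsHarmonic.exists_escape {U A : Set E} (hA : IsHarmonic U A) (hV : IsOpen (U \ A))
    {x : E} (hx : x ∈ U) (w : E) :
    ∃ γ : ℝ → E, Tendsto γ (𝓝[>] 0) (𝓝 0) ∧
      ∀ᶠ p in 𝓝[>] (0:ℝ) ×ˢ 𝓝 (0:ℝ), x + γ p.1 + p.2 • w ∈ U \ A := by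
  by_cases hxA : x ∈ A
  · obtain ⟨δ, hδ, γ, hγ, hγ0, hγA⟩ := hA x hxA w
    refine ⟨γ, ?_, ?_⟩
    · have := (hγ 0 ⟨le_rfl, zero_le_one⟩).mono_of_mem_nhdsWithin (Icc_mem_nhdsGT one_pos)
      simpa [hγ0] using this.tendsto
    · exact mem_of_superset (prod_mem_prod (Ioc_mem_nhdsGT one_pos)
        (Icc_mem_nhds (neg_lt_zero.2 hδ) hδ)) fun p hp => hγA _ hp.1 _ hp.2
  · have hline : Continuous fun r : ℝ => x + r • w := by fun_prop
    have hnear : ∀ᶠ r in 𝓝 (0:ℝ), x + r • w ∈ U \ A :=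
      (hline.tendsto' 0 x (by simp)).eventually (hV.mem_nhds ⟨hx, hxA⟩)
    exact ⟨0, tendsto_const_nhds, by simpa using hnear.prod_inr (𝓝[>] (0:ℝ))⟩

variable {F : Type*} [AddCommGroup F] [Module ℝ F] [TopologicalSpace F]
  [IsTopologicalAddGroup F] [ContinuousSMul ℝ F] [LocallyConvexSpace ℝ F]

theorem slope_comp_line_mem {g g' : E → F} {V : Set E} {K : Set F} (hK : Convex ℝ K)
    (hKclosed : IsClosed K) (hg : ContinuousOn g V) {y w : E}
    (hderiv : ∀ z ∈ V, HasDirDeriv g z w (g' z)) {a b : ℝ} (hab : a ≠ b)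
    (hseg : ∀ r ∈ uIcc a b, y + r • w ∈ V ∧ g' (y + r • w) ∈ K) :
    slope (fun r => g (y + r • w)) a b ∈ K := by
  refine slope_mem_of_tendsto_slope_mem hK hKclosed hab ?_ fun r hr => ?_
  · exact hg.comp (Continuous.continuousOn (by fun_prop)) fun r hr => (hseg r hr).1
  · obtain ⟨hV, hK⟩ := hseg r (Ioo_subset_Icc_self hr)
    exact ⟨_, hK, (hderiv _ hV).tendsto_slope_comp_line⟩

theorem hasDirDeriv_of_tendsto_escape {g g' : E → F} {U V : Set E} {x w : E} {γ : ℝ → E}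
    (hU : IsOpen U) (hx : x ∈ U) (hVU : V ⊆ U)
    (hg : ContinuousOn g U) (hg' : ContinuousOn g' U)
    (hderiv : ∀ y ∈ V, HasDirDeriv g y w (g' y))
    (hγ : Tendsto γ (𝓝[>] 0) (𝓝 0))
    (hescape : ∀ᶠ p in 𝓝[>] (0:ℝ) ×ˢ 𝓝 (0:ℝ), x + γ p.1 + p.2 • w ∈ V) :
    HasDirDeriv g x w (g' x) := by
  refine (nhds_basis_closed_convex (g' x)).tendsto_right_iff.2
    fun K ⟨hKx, hKconv, hKclosed⟩ => ?_
  have hpath : Tendsto (fun p : ℝ × ℝ => x + γ p.1 + p.2 • w) (𝓝[>] 0 ×ˢ 𝓝 0) (𝓝 x) := by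
    have hsnd : Tendsto (fun p : ℝ × ℝ => p.2) (𝓝[>] 0 ×ˢ 𝓝 0) (𝓝 0) := tendsto_snd
    simpa using ((tendsto_const_nhds (x := x)).add (hγ.comp tendsto_fst)).add
      (hsnd.smul_const w)
  have hgood : ∀ᶠ p in 𝓝[>] (0:ℝ) ×ˢ 𝓝 (0:ℝ),
      x + γ p.1 + p.2 • w ∈ V ∧ g' (x + γ p.1 + p.2 • w) ∈ K :=
    hescape.and ((hg' x hx).tendsto.comp
      (tendsto_nhdsWithin_iff.2 ⟨hpath, hescape.mono fun _ hp => hVU hp⟩) hKx)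
  obtain ⟨P, hP, Q, hQ, hPQ⟩ := eventually_prod_iff.1 hgood
  have hline : ∀ᶠ r in 𝓝 (0:ℝ), x + r • w ∈ U := by
    have : Continuous fun r : ℝ => x + r • w := by fun_prop
    exact (this.tendsto' 0 x (by simp)).eventually (hU.mem_nhds hx)
  obtain ⟨τ, hτ, hτQ⟩ := Metric.nhds_basis_closedBall.mem_iff.1 (hQ.and hline)
  rw [Real.closedBall_eq_Icc, zero_sub, zero_add] at hτQ
  have hslope : ∀ s, P s → ∀ t ∈ Icc (-τ) τ, t ≠ 0 →
      slope (fun r => g (x + γ s + r • w)) 0 t ∈ K := by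
    intro s hs t ht ht0
    have hseg : uIcc 0 t ⊆ Icc (-τ) τ := uIcc_subset_Icc ⟨by linarith, hτ.le⟩ ht
    exact slope_comp_line_mem hKconv hKclosed (hg.mono hVU) hderiv ht0.symm
      fun r hr => hPQ hs (hτQ (hseg hr)).1
  have hlimit : ∀ t ∈ Icc (-τ) τ,
      Tendsto (fun s => g (x + γ s + t • w)) (𝓝[>] 0) (𝓝 (g (x + t • w))) := by
    intro t ht
    refine (hg _ (hτQ ht).2).tendsto.comp (tendsto_nhdsWithin_iff.2 ⟨?_, ?_⟩)
    · simpa using (hγ.const_add x).add_const (t • w)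
    · exact hP.mono fun s hs => hVU (hPQ hs (hτQ ht).1).1
  have hτ0 : Icc (-τ) τ ∈ 𝓝[≠] (0:ℝ) :=
    mem_nhdsWithin_of_mem_nhds (Icc_mem_nhds (by linarith) hτ)
  filter_upwards [hτ0, self_mem_nhdsWithin] with t ht ht0
  refine hKclosed.mem_of_tendsto ?_ (hP.mono fun s hs => hslope s hs t ht ht0)
  simpa [slope_def_module] using
    ((hlimit t ht).sub (hlimit 0 ⟨by linarith, hτ.le⟩)).const_smul t⁻¹

end Escape

theorem harmonic_extension_general
    {H F : Type*}
    [AddCommGroup H] [Module ℝ H] [TopologicalSpace H] [IsTopologicalAddGroup H]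
    [ContinuousSMul ℝ H]
    [AddCommGroup F] [Module ℝ F] [TopologicalSpace F] [IsTopologicalAddGroup F]
    [ContinuousSMul ℝ F] [LocallyConvexSpace ℝ F]
    (k : ℕ∞) {U A S : Set H} (hU : IsOpen U)
    (hAclosed : U ∩ closure A ⊆ A)
    (hharm : IsHarmonic U A) (hUS : U ⊆ S)
    (f : H → F) (Df : ℕ → H → (ℕ → H) → F)
    (hf : BastianiFamily k (U \ A) f Df)
    (Φ : ℕ → H → (ℕ → H) → F)
    (hΦcont : ∀ ℓ : ℕ, (ℓ : ℕ∞) ≤ k →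
      ContinuousOn (fun p : H × (ℕ → H) => Φ ℓ p.1 p.2) (S ×ˢ univ))
    (hΦagree : ∀ ℓ : ℕ, (ℓ : ℕ∞) ≤ k → ∀ x ∈ U \ A, ∀ v : ℕ → H, Φ ℓ x v = Df ℓ x v)
    (hΦ0 : ∀ x v, Φ 0 x v = Φ 0 x 0) :
    BastianiFamily k U (fun x => Φ 0 x 0) Φ := by
  have hV : IsOpen (U \ A) := by
    have : U \ A = U \ closure A := Subset.antisymm
      (fun y hy => ⟨hy.1, fun hyA => hy.2 (hAclosed ⟨hy.1, hyA⟩)⟩)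
      (sdiff_subset_sdiff_right subset_closure)
    rw [this]
    exact hU.sdiff isClosed_closure
  have hslice : ∀ ℓ : ℕ, (ℓ : ℕ∞) ≤ k → ∀ v, ContinuousOn (fun y => Φ ℓ y v) U :=
    fun ℓ hℓ v => (hΦcont ℓ hℓ).comp (continuousOn_id.prodMk continuousOn_const)
      fun y hy => ⟨hUS hy, mem_univ v⟩
  refine ⟨hΦ0, fun ℓ hℓ x hx v => ?_, fun ℓ hℓ => (hΦcont ℓ hℓ).mono (prod_mono hUS subset_rfl)⟩
  have hℓ' : ((ℓ + 1 : ℕ) : ℕ∞) ≤ k := by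
    push_cast
    exact Order.add_one_le_of_lt hℓ
  obtain ⟨γ, hγ, hescape⟩ := hharm.exists_escape hV hx (v ℓ)
  refine hasDirDeriv_of_tendsto_escape (g' := fun y => Φ (ℓ + 1) y v) hU hx sdiff_subset
    (hslice ℓ hℓ.le v) (hslice (ℓ + 1) hℓ' v) (fun y hy => ?_) hγ hescape
  have hnear : (fun z => Φ ℓ z v) =ᶠ[𝓝 y] fun z => Df ℓ z v :=
    eventually_of_mem (hV.mem_nhds hy) fun z hz => hΦagree ℓ hℓ.le z hz v
  rw [hΦagree (ℓ + 1) hℓ' y hy v]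
  exact (hf.deriv ℓ hℓ y hy v).congr_of_eventuallyEq hnear

/-- Extension across a harmonic set: let `U ⊆ H` be open nonempty, `A ⊆ U` closed in `U`
and harmonic, `U ⊆ S`, and `f` of class `C^k` on `U \ A` (Bastiani differentials `Df`).
If each `d^ℓ f` (`0 ≤ ℓ ≤ k`) admits a continuous extension `Φ ℓ` to `S × H^ℓ`, then
`f̃ := Φ⁰|_U` is of class `C^k` on `U` with `d^ℓ f̃ = Φ ℓ` on `U × H^ℓ` for all `0 ≤ ℓ ≤ k`. -/
theorem harmonic_extension
    {H F : Type*}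
    [AddCommGroup H] [Module ℝ H] [TopologicalSpace H] [IsTopologicalAddGroup H]
    [ContinuousSMul ℝ H] [LocallyConvexSpace ℝ H] [T2Space H]
    [AddCommGroup F] [Module ℝ F] [TopologicalSpace F] [IsTopologicalAddGroup F]
    [ContinuousSMul ℝ F] [LocallyConvexSpace ℝ F] [T2Space F]
    (k : ℕ∞) {U A S : Set H} (hU : IsOpen U) (hUne : U.Nonempty)
    (hAU : A ⊆ U) (hAclosed : U ∩ closure A ⊆ A)
    (hharm : IsHarmonic U A) (hUS : U ⊆ S)
    (f : H → F) (Df : ℕ → H → (ℕ → H) → F)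
    (hf : BastianiFamily k (U \ A) f Df)
    (Φ : ℕ → H → (ℕ → H) → F)
    (hΦcont : ∀ ℓ : ℕ, (ℓ : ℕ∞) ≤ k →
      ContinuousOn (fun p : H × (ℕ → H) => Φ ℓ p.1 p.2) (S ×ˢ univ))
    (hΦagree : ∀ ℓ : ℕ, (ℓ : ℕ∞) ≤ k → ∀ x ∈ U \ A, ∀ v : ℕ → H, Φ ℓ x v = Df ℓ x v)
    (hΦ0 : ∀ x v, Φ 0 x v = Φ 0 x 0) :
    BastianiFamily k U (fun x => Φ 0 x 0) Φ :=
  harmonic_extension_general k hU hAclosed hharm hUS f Df hf Φ hΦcont hΦagree hΦ0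
end

section
/- Let E, F be Hausdorff locally convex spaces, V ⊆ E nonempty open, k ∈ ℕ∪{∞}, and f ∈ C^k((−∞,0)×V, F) such that each differential d^ℓf (0 ≤ ℓ ≤ k) extends continuously to (−∞,0]×V×(ℝ×E)^ℓ → F. Fix τ < 0, a cutoff ϱ ∈ C^∞(ℝ,ℝ) with ϱ = 0 on (−∞,τ] and ϱ = 1 on [υ,0] for some τ < υ < 0, and a Seeley sequence (c_j) with ∑_j c_j(−2^j)^q = 1 and ∑_j |c_j|(2^j)^q < ∞ for all q ∈ ℕ. Then the formula f₊(t,x) := ∑_{j=0}^∞ c_j·ϱ(−2^j t)·f(−2^j t, x) defines a C^k map on (0,∞)×V: for every s > 0 there is a neighborhood I of s and N ∈ ℕ such that the sum restricted to I×V has only the terms j ≤ N nonzero, and f₊ = 0 on [−τ,∞)×V. -/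
open Filter Topology Set

section SeeleyHelpers

variable {E F : Type*} [AddCommGroup E] [Module ℝ E] [TopologicalSpace E]
    [AddCommGroup F] [Module ℝ F] [TopologicalSpace F]

theorem HasDirDeriv.congr'' {f g : E → F} {x v : E} {L : F}
    (h : HasDirDeriv f x v L) (he : ∀ᶠ t in 𝓝[≠] (0:ℝ), f (x + t • v) = g (x + t • v))
    (hx : f x = g x) : HasDirDeriv g x v L :=
  Tendsto.congr' (he.mono fun t ht => by rw [ht, hx]) h

theorem HasDirDeriv.finsetSum [IsTopologicalAddGroup F] {ι : Type*} (s : Finset ι)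
    {g : ι → E → F} {x v : E} {L : ι → F}
    (h : ∀ i ∈ s, HasDirDeriv (g i) x v (L i)) :
    HasDirDeriv (fun y => ∑ i ∈ s, g i y) x v (∑ i ∈ s, L i) := by
  refine (tendsto_finset_sum s fun i hi => h i hi).congr fun t => ?_
  rw [← Finset.sum_sub_distrib, ← Finset.smul_sum]

theorem line_eventually_mem [IsTopologicalAddGroup E] [ContinuousSMul ℝ E]
    {O : Set E} (hO : IsOpen O) {x : E} (hx : x ∈ O) (v : E) :
    ∀ᶠ t in 𝓝[≠] (0:ℝ), x + t • v ∈ O := by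
  have hc : Continuous (fun t : ℝ => x + t • v) :=
    continuous_const.add (continuous_id.smul continuous_const)
  have hmem : O ∈ 𝓝 ((fun t : ℝ => x + t • v) 0) := hO.mem_nhds (by simpa using hx)
  exact ((hc.tendsto 0).eventually_mem hmem).filter_mono nhdsWithin_le_nhds

theorem HasDirDeriv.smulProd [IsTopologicalAddGroup F] [ContinuousSMul ℝ F]
    {α : E → ℝ} {G : E → F} {x v : E} {a : ℝ} {g : F}
    (hα : HasDirDeriv α x v a) (hG : HasDirDeriv G x v g)
    (hGc : Tendsto (fun t : ℝ => G (x + t • v)) (𝓝[≠] (0:ℝ)) (𝓝 (G x))) :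
    HasDirDeriv (fun y => α y • G y) x v (a • G x + α x • g) := by
  have h1 : Tendsto (fun t : ℝ => (t⁻¹ • (α (x + t • v) - α x)) • G (x + t • v))
      (𝓝[≠] (0:ℝ)) (𝓝 (a • G x)) := hα.smul hGc
  have h2 : Tendsto (fun t : ℝ => α x • (t⁻¹ • (G (x + t • v) - G x)))
      (𝓝[≠] (0:ℝ)) (𝓝 (α x • g)) := hG.const_smul (α x)
  refine (h1.add h2).congr fun t => ?_
  have h3 : (t⁻¹ • (α (x + t • v) - α x)) • G (x + t • v) =
      t⁻¹ • ((α (x + t • v) - α x) • G (x + t • v)) := smul_assoc _ _ _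
  rw [h3, smul_comm (α x) t⁻¹, ← smul_add]
  congr 1
  rw [sub_smul, smul_sub]
  abel

theorem hasDirDeriv_of_hasDerivAt {α : E → ℝ} {x v : E} {a : ℝ}
    (h : HasDerivAt (fun t : ℝ => α (x + t • v)) a 0) : HasDirDeriv α x v a := by
  have h1 := hasDerivAt_iff_tendsto_slope.mp h
  refine h1.congr fun t => ?_
  rw [slope_def_field]
  simp [div_eq_inv_mul, sub_zero]

theorem contDiff_iteratedDeriv' (ϱ : ℝ → ℝ) (hϱ : ContDiff ℝ (⊤ : ℕ∞) ϱ) (s : ℕ) :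
    ContDiff ℝ ((⊤ : ℕ∞) : WithTop ℕ∞) (iteratedDeriv s ϱ) := by
  rw [iteratedDeriv_eq_iterate]
  exact ContDiff.iterate_deriv (𝕜 := ℝ) s (hϱ.of_le (by simp))

theorem scalar_dirderiv (ϱ : ℝ → ℝ) (hϱ : ContDiff ℝ (⊤ : ℕ∞) ϱ) (K P : ℝ) (s j : ℕ) (z d : ℝ × E) :
    HasDirDeriv (fun y : ℝ × E => K * iteratedDeriv s ϱ (-(2:ℝ)^j * y.1) * P) z d
      (K * (iteratedDeriv (s+1) ϱ (-(2:ℝ)^j * z.1) * (-(2:ℝ)^j * d.1)) * P) := by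
  apply hasDirDeriv_of_hasDerivAt
  have hψ := contDiff_iteratedDeriv' ϱ hϱ s
  have hin : HasDerivAt (fun t : ℝ => -(2:ℝ)^j * (z.1 + t * d.1)) (-(2:ℝ)^j * d.1) 0 := by
    simpa using ((((hasDerivAt_id (0:ℝ)).mul_const d.1).const_add z.1).const_mul (-(2:ℝ)^j))
  have hd : HasDerivAt (iteratedDeriv s ϱ)
      (iteratedDeriv (s+1) ϱ (-(2:ℝ)^j * (z.1 + 0 * d.1))) (-(2:ℝ)^j * (z.1 + 0 * d.1)) := by
    rw [iteratedDeriv_succ]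
    exact ((hψ.differentiable (by simp)) _).hasDerivAt
  have h2 := ((hd.comp 0 hin).const_mul K).mul_const P
  have h0 : z.1 + 0 * d.1 = z.1 := by ring
  rw [h0] at h2
  exact h2

theorem sort_insert_max {a : ℕ} {s : Finset ℕ} (h₁ : ∀ b ∈ s, b < a) (h₂ : a ∉ s) :
    (insert a s).sort (· ≤ ·) = s.sort (· ≤ ·) ++ [a] := by
  refine (fun hp hs => List.Perm.eq_of_pairwise' (Finset.pairwise_sort _ _) hs hp) ?_ ?_
  · exact ((Finset.sort_perm_toList _ _).trans ((Finset.toList_insert h₂).trans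
      (((Finset.sort_perm_toList _ _).symm.cons a).trans
        (List.perm_append_singleton _ _).symm)))
  · rw [List.pairwise_append]
    refine ⟨Finset.pairwise_sort _ _, List.pairwise_singleton _ _, ?_⟩
    intro x hx y hy
    rw [List.mem_singleton] at hy
    subst hy
    exact (h₁ x ((Finset.mem_sort _).mp hx)).le

/-- The reparametrization `(t, x) ↦ (−2ʲt, x)`. -/
def Lm {E : Type*} (j : ℕ) (z : ℝ × E) : ℝ × E := (-(2:ℝ)^j * z.1, z.2)

/-- Increasing enumeration of `range ℓ \ S`, used to feed directions to `Df`. -/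
def sig (ℓ : ℕ) (S : Finset ℕ) (i : ℕ) : ℕ :=
  ((Finset.range ℓ \ S).sort (· ≤ ·)).getD i 0

theorem sdiff_range_succ {ℓ : ℕ} {S : Finset ℕ} (hS : S ⊆ Finset.range ℓ) :
    Finset.range (ℓ+1) \ S = insert ℓ (Finset.range ℓ \ S) := by
  ext i
  simp only [Finset.mem_sdiff, Finset.mem_range, Finset.mem_insert]
  constructor
  · rintro ⟨h1, h2⟩
    rcases Nat.lt_succ_iff_lt_or_eq.mp h1 with h | h
    · exact Or.inr ⟨h, h2⟩
    · exact Or.inl h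
  · rintro (rfl | ⟨h1, h2⟩)
    · exact ⟨Nat.lt_succ_self _, fun h => absurd (Finset.mem_range.mp (hS h)) (lt_irrefl _)⟩
    · exact ⟨Nat.lt_succ_of_lt h1, h2⟩

theorem sdiff_range_succ_insert {ℓ : ℕ} {S : Finset ℕ} :
    Finset.range (ℓ+1) \ insert ℓ S = Finset.range ℓ \ S := by
  ext i
  simp only [Finset.mem_sdiff, Finset.mem_range, Finset.mem_insert, not_or]
  constructor
  · rintro ⟨h1, h2, h3⟩; exact ⟨by omega, h3⟩
  · rintro ⟨h1, h2⟩; exact ⟨by omega, by omega, h2⟩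

theorem sortA {ℓ : ℕ} {S : Finset ℕ} (hS : S ⊆ Finset.range ℓ) :
    (Finset.range (ℓ+1) \ S).sort (· ≤ ·) = (Finset.range ℓ \ S).sort (· ≤ ·) ++ [ℓ] := by
  rw [sdiff_range_succ hS]
  refine sort_insert_max ?_ ?_
  · intro b hb; exact Finset.mem_range.mp (Finset.mem_sdiff.mp hb).1
  · intro h; exact absurd (Finset.mem_range.mp (Finset.mem_sdiff.mp h).1) (lt_irrefl _)

theorem sort_length_sdiff {ℓ : ℕ} {S : Finset ℕ} (hS : S ⊆ Finset.range ℓ) :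
    ((Finset.range ℓ \ S).sort (· ≤ ·)).length = ℓ - S.card := by
  rw [Finset.length_sort, Finset.card_sdiff_of_subset hS, Finset.card_range]

theorem sig_eq_of_lt {ℓ : ℕ} {S : Finset ℕ} (hS : S ⊆ Finset.range ℓ) {i : ℕ}
    (hi : i < ℓ - S.card) : sig (ℓ+1) S i = sig ℓ S i := by
  rw [sig, sig, sortA hS, List.getD_append]
  rw [sort_length_sdiff hS]; exact hi

theorem sig_eq_at {ℓ : ℕ} {S : Finset ℕ} (hS : S ⊆ Finset.range ℓ) :
    sig (ℓ+1) S (ℓ - S.card) = ℓ := by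
  rw [sig, sortA hS, List.getD_append_right _ _ _ _ (by rw [sort_length_sdiff hS])]
  rw [sort_length_sdiff hS, Nat.sub_self]
  rfl

theorem sig_insert {ℓ : ℕ} {S : Finset ℕ} :
    sig (ℓ+1) (insert ℓ S) = sig ℓ S := by
  funext i; rw [sig, sig, sdiff_range_succ_insert]

/-- A single term of the (differentiated) Seeley sum. -/
noncomputable def trm (c : ℕ → ℝ) (ϱ : ℝ → ℝ) (Df : ℕ → (ℝ × E) → (ℕ → ℝ × E) → F)
    (j ℓ : ℕ) (S : Finset ℕ) (z : ℝ × E) (v : ℕ → ℝ × E) : F :=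
  (c j * (-(2:ℝ)^j)^S.card * iteratedDeriv S.card ϱ (-(2:ℝ)^j * z.1) * ∏ i ∈ S, (v i).1) •
    Df (ℓ - S.card) (Lm j z) (fun i => Lm j (v (sig ℓ S i)))

/-- The candidate Bastiani differentials of the Seeley sum. -/
noncomputable def DD (c : ℕ → ℝ) (ϱ : ℝ → ℝ) (Df : ℕ → (ℝ × E) → (ℕ → ℝ × E) → F)
    (ℓ : ℕ) (z : ℝ × E) (v : ℕ → ℝ × E) : F :=
  ∑' j : ℕ, ∑ S ∈ (Finset.range ℓ).powerset, trm c ϱ Df j ℓ S z v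

end SeeleyHelpers

/-- The Seeley sum: given `f ∈ C^k((−∞,0)×V, F)` whose differentials extend continuously
to `(−∞,0]×V`, a cutoff `ϱ` (`= 0` on `(−∞,τ]`, `= 1` on `[υ,0]`, `τ < υ < 0`), and a
Seeley sequence `(cⱼ)`, the formula `f₊(t,x) = ∑ⱼ cⱼ·ϱ(−2ʲt)·f(−2ʲt,x)` is locally finite
in `t > 0` (near any `s > 0` only finitely many terms are nonzero), defines a `C^k` map on
`(0,∞)×V`, and vanishes identically on `[−τ,∞)×V = [|τ|,∞)×V`. -/
theorem seeley_sum_smooth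
    {E F : Type*}
    [AddCommGroup E] [Module ℝ E] [TopologicalSpace E] [IsTopologicalAddGroup E]
    [ContinuousSMul ℝ E] [LocallyConvexSpace ℝ E] [T2Space E]
    [AddCommGroup F] [Module ℝ F] [TopologicalSpace F] [IsTopologicalAddGroup F]
    [ContinuousSMul ℝ F] [LocallyConvexSpace ℝ F] [T2Space F]
    (k : ℕ∞) {V : Set E} (hV : IsOpen V) (hVne : V.Nonempty)
    (f : ℝ × E → F) (Df : ℕ → (ℝ × E) → (ℕ → ℝ × E) → F)
    (hf : BastianiFamily k (Iio (0:ℝ) ×ˢ V) f Df)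
    (Φ : ℕ → (ℝ × E) → (ℕ → ℝ × E) → F)
    (hΦcont : ∀ ℓ : ℕ, (ℓ : ℕ∞) ≤ k →
      ContinuousOn (fun p : (ℝ × E) × (ℕ → ℝ × E) => Φ ℓ p.1 p.2)
        ((Iic (0:ℝ) ×ˢ V) ×ˢ univ))
    (hΦ : ∀ ℓ : ℕ, (ℓ : ℕ∞) ≤ k → ∀ z ∈ Iio (0:ℝ) ×ˢ V, ∀ w, Φ ℓ z w = Df ℓ z w)
    (τ υ : ℝ) (hτυ : τ < υ) (hυ : υ < 0)
    (ϱ : ℝ → ℝ) (hϱ : ContDiff ℝ (⊤ : ℕ∞) ϱ)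
    (hϱ0 : ∀ t ≤ τ, ϱ t = 0) (hϱ1 : ∀ t ∈ Icc υ (0:ℝ), ϱ t = 1)
    (c : ℕ → ℝ)
    (hc1 : ∀ q : ℕ, HasSum (fun j : ℕ => c j * (-(2:ℝ) ^ j) ^ q) 1)
    (hc2 : ∀ q : ℕ, Summable (fun j : ℕ => |c j| * ((2:ℝ) ^ j) ^ q)) :
    (∀ s : ℝ, 0 < s → ∃ ε : ℝ, 0 < ε ∧ ∃ N : ℕ, ∀ j ≥ N, ∀ t ∈ Ioo (s - ε) (s + ε),
        c j * ϱ (-(2:ℝ) ^ j * t) = 0) ∧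
    (∃ D : ℕ → (ℝ × E) → (ℕ → ℝ × E) → F,
      BastianiFamily k (Ioi (0:ℝ) ×ˢ V)
        (fun z => ∑' j : ℕ, (c j * ϱ (-(2:ℝ) ^ j * z.1)) • f (-(2:ℝ) ^ j * z.1, z.2)) D) ∧
    (∀ t : ℝ, -τ ≤ t → ∀ x : E,
        (∑' j : ℕ, (c j * ϱ (-(2:ℝ) ^ j * t)) • f (-(2:ℝ) ^ j * t, x)) = 0) := by
  have h2pos : ∀ j : ℕ, (0:ℝ) < 2 ^ j := fun j => pow_pos two_pos j
  have hτ0 : τ < 0 := hτυ.trans hυ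
  -- vanishing of all iterated derivatives of the cutoff left of τ
  have hvan : ∀ (n : ℕ) (p : ℝ), p < τ → iteratedDeriv n ϱ p = 0 := by
    intro n
    induction n with
    | zero => intro p hp; simpa using hϱ0 p hp.le
    | succ n ih =>
      intro p hp
      rw [iteratedDeriv_succ]
      have he : iteratedDeriv n ϱ =ᶠ[𝓝 p] fun _ => (0:ℝ) :=
        Filter.eventually_of_mem (Iio_mem_nhds hp) (fun q hq => ih q hq)
      rw [he.deriv_eq]
      exact deriv_const _ _
  have htrm0 : ∀ (j ℓ : ℕ) (S : Finset ℕ) (z : ℝ × E) (v : ℕ → ℝ × E),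
      -(2:ℝ)^j * z.1 < τ → trm c ϱ Df j ℓ S z v = 0 := by
    intro j ℓ S z v h
    rw [trm, hvan _ _ h]
    simp
  have hnum : ∀ t₀ : ℝ, 0 < t₀ → ∃ N : ℕ, ∀ j, N ≤ j → ∀ t : ℝ, t₀ / 2 < t →
      -(2:ℝ)^j * t < τ := by
    intro t₀ ht₀
    obtain ⟨N, hN⟩ := pow_unbounded_of_one_lt (R := ℝ) ((-τ) / (t₀ / 2)) one_lt_two
    refine ⟨N, fun j hj t ht => ?_⟩
    have h1 : -τ < 2 ^ N * (t₀ / 2) := by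
      rw [div_lt_iff₀ (by linarith : (0:ℝ) < t₀ / 2)] at hN
      linarith
    have h2 : (2:ℝ) ^ N ≤ 2 ^ j := pow_le_pow_right₀ one_le_two hj
    nlinarith [h2pos N, h2pos j]
  have hU : IsOpen (Iio (0:ℝ) ×ˢ V) := IsOpen.prod isOpen_Iio hV
  have hLmU : ∀ (j : ℕ) (z : ℝ × E), z ∈ Ioi (0:ℝ) ×ˢ V → Lm j z ∈ Iio (0:ℝ) ×ˢ V := by
    intro j z hz
    rcases Set.mem_prod.mp hz with ⟨hz1, hz2⟩
    refine Set.mem_prod.mpr ⟨?_, hz2⟩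
    have := Set.mem_Ioi.mp hz1
    simp only [Lm, Set.mem_Iio]
    nlinarith [h2pos j]
  have hLmc : ∀ j : ℕ, Continuous (Lm (E := E) j) := fun j =>
    (continuous_const.mul continuous_fst).prodMk continuous_snd
  have hLm_lin : ∀ (j : ℕ) (z d : ℝ × E) (t : ℝ), Lm j (z + t • d) = Lm j z + t • Lm j d := by
    intro j z d t
    have harith : -(2:ℝ)^j * (z.1 + t * d.1) = -(2:ℝ)^j * z.1 + t * (-(2:ℝ)^j * d.1) := by ring
    simp only [Lm, Prod.ext_iff, Prod.fst_add, Prod.snd_add, Prod.smul_fst, Prod.smul_snd,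
      smul_eq_mul]
    exact ⟨harith, trivial⟩
  -- independence of Df ℓ from directions of index ≥ ℓ
  have indep : ∀ ℓ : ℕ, (ℓ : ℕ∞) ≤ k → ∀ z ∈ Iio (0:ℝ) ×ˢ V, ∀ v w : ℕ → ℝ × E,
      (∀ i, i < ℓ → v i = w i) → Df ℓ z v = Df ℓ z w := by
    intro ℓ
    induction ℓ with
    | zero => intro _ z _ v w _; rw [hf.zeroth, hf.zeroth]
    | succ ℓ ih =>
      intro hk z hz v w hvw
      have hℓk : (ℓ : ℕ∞) < k :=
        lt_of_lt_of_le (by exact_mod_cast Nat.lt_succ_self ℓ) hk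
      have hℓk' : (ℓ : ℕ∞) ≤ k := hℓk.le
      have h1 := hf.deriv ℓ hℓk z hz v
      have h2 := hf.deriv ℓ hℓk z hz w
      have hvl : v ℓ = w ℓ := hvw ℓ (Nat.lt_succ_self ℓ)
      rw [← hvl] at h2
      have h2' : HasDirDeriv (fun y => Df ℓ y v) z (v ℓ) (Df (ℓ+1) z w) := by
        refine h2.congr'' ?_ ?_
        · filter_upwards [line_eventually_mem hU hz (v ℓ)] with t ht
          exact ih hℓk' _ ht w v fun i hi => (hvw i (Nat.lt_succ_of_lt hi)).symm
        · exact ih hℓk' _ hz w v fun i hi => (hvw i (Nat.lt_succ_of_lt hi)).symm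
      exact tendsto_nhds_unique h1 h2'
  -- locally finitely many nonvanishing terms
  have hloc : ∀ z : ℝ × E, 0 < z.1 → ∃ N : ℕ, ∀ (y : ℝ × E), z.1 / 2 < y.1 →
      ∀ (j : ℕ), N ≤ j → ∀ (ℓ : ℕ) (S : Finset ℕ) (v : ℕ → ℝ × E),
      trm c ϱ Df j ℓ S y v = 0 := by
    intro z hz
    obtain ⟨N, hN⟩ := hnum z.1 hz
    exact ⟨N, fun y hy j hj ℓ S v => htrm0 j ℓ S y v (hN j hj y.1 hy)⟩
  have hDDfin : ∀ (z : ℝ × E) (N : ℕ),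
      (∀ (y : ℝ × E), z.1 / 2 < y.1 → ∀ (j : ℕ), N ≤ j → ∀ (ℓ : ℕ) (S : Finset ℕ)
        (v : ℕ → ℝ × E), trm c ϱ Df j ℓ S y v = 0) →
      ∀ (y : ℝ × E), z.1 / 2 < y.1 → ∀ (ℓ : ℕ) (v : ℕ → ℝ × E),
      DD c ϱ Df ℓ y v =
        ∑ j ∈ Finset.range N, ∑ S ∈ (Finset.range ℓ).powerset, trm c ϱ Df j ℓ S y v := by
    intro z N hN y hy ℓ v
    refine tsum_eq_sum fun j hj => Finset.sum_eq_zero fun S _ => ?_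
    exact hN y hy j (Nat.le_of_not_lt (fun h => hj (Finset.mem_range.mpr h))) ℓ S v
  refine ⟨?_, ⟨DD c ϱ Df, ?_, ?_, ?_⟩, ?_⟩
  · -- local finiteness
    intro s hs
    obtain ⟨N, hN⟩ := hnum s hs
    refine ⟨s / 2, by linarith, N, fun j hj t ht => ?_⟩
    have h1 : s / 2 < t := by
      have := ht.1
      linarith
    rw [hϱ0 _ (hN j hj t h1).le, mul_zero]
  · -- zeroth
    intro z v
    rw [DD]
    refine tsum_congr fun j => ?_
    rw [Finset.range_zero, Finset.powerset_empty, Finset.sum_singleton, trm]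
    simp only [Finset.card_empty, pow_zero, iteratedDeriv_zero, Finset.prod_empty, mul_one,
      one_mul, Nat.zero_sub, hf.zeroth]
    rfl
  · -- deriv
    intro ℓ hℓk z hz v
    have hz1 : 0 < z.1 := Set.mem_Ioi.mp (Set.mem_prod.mp hz).1
    obtain ⟨N, hN⟩ := hloc z hz1
    have hzO : z.1 / 2 < z.1 := by linarith
    have hℓk' : (ℓ : ℕ∞) ≤ k := hℓk.le
    have hℓ1k : ((ℓ + 1 : ℕ) : ℕ∞) ≤ k := by
      have := Order.add_one_le_of_lt hℓk
      exact_mod_cast this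
    -- per-term directional derivative
    have key : ∀ j : ℕ, ∀ S ∈ (Finset.range ℓ).powerset,
        HasDirDeriv (fun y => trm c ϱ Df j ℓ S y v) z (v ℓ)
          (trm c ϱ Df j (ℓ+1) (insert ℓ S) z v + trm c ϱ Df j (ℓ+1) S z v) := by
      intro j S hSmem
      have hS : S ⊆ Finset.range ℓ := Finset.mem_powerset.mp hSmem
      have hsl : S.card ≤ ℓ := by
        have := Finset.card_le_card hS
        simpa using this
      have hlS : ℓ ∉ S := fun h => absurd (Finset.mem_range.mp (hS h)) (lt_irrefl _)
      have hmk : ((ℓ - S.card : ℕ) : ℕ∞) ≤ k :=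
        le_trans (by exact_mod_cast Nat.sub_le ℓ S.card) hℓk'
      have hmk_lt : ((ℓ - S.card : ℕ) : ℕ∞) < k :=
        lt_of_le_of_lt (by exact_mod_cast Nat.sub_le ℓ S.card) hℓk
      have hm1k : ((ℓ - S.card + 1 : ℕ) : ℕ∞) ≤ k :=
        le_trans (by exact_mod_cast Nat.succ_le_succ (Nat.sub_le ℓ S.card)) hℓ1k
      set w : ℕ → ℝ × E := fun i => Lm j (v (sig ℓ S i)) with hw
      set v' : ℕ → ℝ × E := Function.update w (ℓ - S.card) (Lm j (v ℓ)) with hv'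
      have hvm : v' (ℓ - S.card) = Lm j (v ℓ) := Function.update_self _ _ _
      have hv'w : ∀ i, i < ℓ - S.card → v' i = w i := fun i hi =>
        Function.update_of_ne (Nat.ne_of_lt hi) _ _
      -- derivative of the scalar factor
      have hαd : HasDirDeriv
          (fun y : ℝ × E => c j * (-(2:ℝ)^j)^S.card *
            iteratedDeriv S.card ϱ (-(2:ℝ)^j * y.1) * ∏ i ∈ S, (v i).1) z (v ℓ)
          (c j * (-(2:ℝ)^j)^S.card *
            (iteratedDeriv (S.card+1) ϱ (-(2:ℝ)^j * z.1) * (-(2:ℝ)^j * (v ℓ).1)) *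
            ∏ i ∈ S, (v i).1) :=
        scalar_dirderiv ϱ hϱ _ _ S.card j z (v ℓ)
      have hOpre : IsOpen (Lm (E := E) j ⁻¹' (Iio (0:ℝ) ×ˢ V)) := hU.preimage (hLmc j)
      have hzpre : z ∈ Lm (E := E) j ⁻¹' (Iio (0:ℝ) ×ˢ V) := hLmU j z hz
      have hev : ∀ᶠ t in 𝓝[≠] (0:ℝ), z + t • (v ℓ) ∈ Lm (E := E) j ⁻¹' (Iio (0:ℝ) ×ˢ V) :=
        line_eventually_mem hOpre hzpre _
      -- derivative of the vector factor
      have hGd : HasDirDeriv (fun y : ℝ × E => Df (ℓ - S.card) (Lm j y) w) z (v ℓ)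
          (Df (ℓ - S.card + 1) (Lm j z) v') := by
        have H := hf.deriv (ℓ - S.card) hmk_lt (Lm j z) (hLmU j z hz) v'
        rw [HasDirDeriv] at H ⊢
        refine Tendsto.congr' ?_ H
        filter_upwards [hev] with t ht
        have e1 : Lm j z + t • v' (ℓ - S.card) = Lm j (z + t • v ℓ) := by
          rw [hvm, hLm_lin]
        rw [e1]
        have e2 : Df (ℓ - S.card) (Lm j (z + t • v ℓ)) v' =
            Df (ℓ - S.card) (Lm j (z + t • v ℓ)) w := indep _ hmk _ ht v' w hv'w
        have e3 : Df (ℓ - S.card) (Lm j z) v' = Df (ℓ - S.card) (Lm j z) w :=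
          indep _ hmk _ (hLmU j z hz) v' w hv'w
        rw [e2, e3]
      -- continuity of the vector factor along the line
      have hGc : Tendsto (fun t : ℝ => Df (ℓ - S.card) (Lm j (z + t • v ℓ)) w)
          (𝓝[≠] (0:ℝ)) (𝓝 (Df (ℓ - S.card) (Lm j z) w)) := by
        have hGcont : ContinuousOn (fun y : ℝ × E => Df (ℓ - S.card) (Lm j y) w)
            (Lm (E := E) j ⁻¹' (Iio (0:ℝ) ×ˢ V)) := by
          have h2c : Continuous (fun y : ℝ × E => ((Lm j y, w) : (ℝ × E) × (ℕ → ℝ × E))) :=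
            (hLmc j).prodMk continuous_const
          exact (hf.cont _ hmk).comp h2c.continuousOn
            (fun y hy => Set.mk_mem_prod hy (Set.mem_univ _))
        have hca : ContinuousAt (fun y : ℝ × E => Df (ℓ - S.card) (Lm j y) w) z :=
          hGcont.continuousAt (hOpre.mem_nhds hzpre)
        have hline : Tendsto (fun t : ℝ => z + t • v ℓ) (𝓝[≠] (0:ℝ)) (𝓝 z) := by
          have hc : Continuous (fun t : ℝ => z + t • v ℓ) :=
            continuous_const.add (continuous_id.smul continuous_const)
          have h0 := hc.tendsto 0
          simp only [zero_smul, add_zero] at h0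
          exact h0.mono_left nhdsWithin_le_nhds
        exact hca.tendsto.comp hline
      have hcomb := HasDirDeriv.smulProd hαd hGd hGc
      -- identify the two limit terms
      have e_ins : trm c ϱ Df j (ℓ+1) (insert ℓ S) z v =
          (c j * (-(2:ℝ)^j)^S.card *
            (iteratedDeriv (S.card+1) ϱ (-(2:ℝ)^j * z.1) * (-(2:ℝ)^j * (v ℓ).1)) *
            ∏ i ∈ S, (v i).1) • Df (ℓ - S.card) (Lm j z) w := by
        rw [trm, Finset.card_insert_of_notMem hlS]
        have hsub : ℓ + 1 - (S.card + 1) = ℓ - S.card := by omega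
        rw [hsub, sig_insert, Finset.prod_insert hlS]
        congr 1
        ring
      have e_S : trm c ϱ Df j (ℓ+1) S z v =
          (c j * (-(2:ℝ)^j)^S.card * iteratedDeriv S.card ϱ (-(2:ℝ)^j * z.1) *
            ∏ i ∈ S, (v i).1) • Df (ℓ - S.card + 1) (Lm j z) v' := by
        rw [trm]
        have hsub : ℓ + 1 - S.card = ℓ - S.card + 1 := by omega
        rw [hsub]
        congr 1
        refine indep _ hm1k _ (hLmU j z hz) _ _ ?_
        intro i hi
        rcases Nat.lt_succ_iff_lt_or_eq.mp hi with h | h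
        · rw [sig_eq_of_lt hS h, hv'w i h]
        · subst h
          rw [sig_eq_at hS, hvm]
      rw [← e_ins, ← e_S] at hcomb
      exact hcomb
    -- finite-sum directional derivative
    have hfin := HasDirDeriv.finsetSum (Finset.range N)
      (g := fun j y => ∑ S ∈ (Finset.range ℓ).powerset, trm c ϱ Df j ℓ S y v)
      (L := fun j => ∑ S ∈ (Finset.range ℓ).powerset,
        (trm c ϱ Df j (ℓ+1) (insert ℓ S) z v + trm c ϱ Df j (ℓ+1) S z v))
      (fun j _ => HasDirDeriv.finsetSum _ (fun S hS => key j S hS))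
    -- the limit is DD (ℓ+1) z v
    have hdisj : Disjoint ((Finset.range ℓ).powerset)
        (((Finset.range ℓ).powerset).image (insert ℓ)) := by
      rw [Finset.disjoint_left]
      intro T hT hT'
      obtain ⟨S, hSm, rfl⟩ := Finset.mem_image.mp hT'
      have hmem : ℓ ∈ insert ℓ S := Finset.mem_insert_self _ _
      exact absurd (Finset.mem_range.mp (Finset.mem_powerset.mp hT hmem)) (lt_irrefl _)
    have hDD1 : DD c ϱ Df (ℓ+1) z v = ∑ j ∈ Finset.range N,
        ∑ S ∈ (Finset.range ℓ).powerset,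
        (trm c ϱ Df j (ℓ+1) (insert ℓ S) z v + trm c ϱ Df j (ℓ+1) S z v) := by
      rw [hDDfin z N hN z hzO (ℓ+1) v]
      refine Finset.sum_congr rfl fun j _ => ?_
      rw [Finset.range_add_one, Finset.powerset_insert, Finset.sum_union hdisj,
        Finset.sum_image ?inj, Finset.sum_add_distrib]
      case inj =>
        intro x hx y hy hxy
        have hxl : ℓ ∉ x := fun h =>
          absurd (Finset.mem_range.mp (Finset.mem_powerset.mp hx h)) (lt_irrefl _)
        have hyl : ℓ ∉ y := fun h =>
          absurd (Finset.mem_range.mp (Finset.mem_powerset.mp hy h)) (lt_irrefl _)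
        rw [← Finset.erase_insert hxl, hxy, Finset.erase_insert hyl]
      exact add_comm _ _
    rw [hDD1]
    refine HasDirDeriv.congr'' hfin ?_ ?_
    · have hOopen : IsOpen {y : ℝ × E | z.1 / 2 < y.1} :=
        isOpen_lt continuous_const continuous_fst
      filter_upwards [line_eventually_mem hOopen hzO (v ℓ)] with t ht
      exact (hDDfin z N hN _ ht ℓ v).symm
    · exact (hDDfin z N hN z hzO ℓ v).symm
  · -- cont
    intro ℓ hℓk
    intro p hp
    have hp1 : p.1 ∈ Ioi (0:ℝ) ×ˢ V := (Set.mem_prod.mp hp).1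
    have hp11 : 0 < p.1.1 := Set.mem_Ioi.mp (Set.mem_prod.mp hp1).1
    obtain ⟨N, hN⟩ := hloc p.1 hp11
    have hFS : ContinuousOn (fun q : (ℝ × E) × (ℕ → ℝ × E) =>
        ∑ j ∈ Finset.range N, ∑ S ∈ (Finset.range ℓ).powerset, trm c ϱ Df j ℓ S q.1 q.2)
        ((Ioi (0:ℝ) ×ˢ V) ×ˢ univ) := by
      refine continuousOn_finset_sum _ fun j _ => continuousOn_finset_sum _ fun S hSm => ?_
      have hS : S ⊆ Finset.range ℓ := Finset.mem_powerset.mp hSm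
      have hmk : ((ℓ - S.card : ℕ) : ℕ∞) ≤ k :=
        le_trans (by exact_mod_cast Nat.sub_le ℓ S.card) hℓk
      have hsc : Continuous (fun q : (ℝ × E) × (ℕ → ℝ × E) =>
          c j * (-(2:ℝ)^j)^S.card * iteratedDeriv S.card ϱ (-(2:ℝ)^j * q.1.1) *
            ∏ i ∈ S, (q.2 i).1) := by
        refine Continuous.mul (Continuous.mul continuous_const ?_) ?_
        · exact (contDiff_iteratedDeriv' ϱ hϱ S.card).continuous.comp
            (continuous_const.mul (continuous_fst.fst))
        · exact continuous_finset_prod _ fun i _ =>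
            ((continuous_apply i).comp continuous_snd).fst
      have hΨ : Continuous (fun q : (ℝ × E) × (ℕ → ℝ × E) =>
          ((Lm j q.1, fun i => Lm j (q.2 (sig ℓ S i))) : (ℝ × E) × (ℕ → ℝ × E))) :=
        ((hLmc j).comp continuous_fst).prodMk
          (continuous_pi fun i => (hLmc j).comp ((continuous_apply _).comp continuous_snd))
      have hvec : ContinuousOn (fun q : (ℝ × E) × (ℕ → ℝ × E) =>
          Df (ℓ - S.card) (Lm j q.1) (fun i => Lm j (q.2 (sig ℓ S i))))
          ((Ioi (0:ℝ) ×ˢ V) ×ˢ univ) := by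
        refine (hf.cont _ hmk).comp hΨ.continuousOn fun q hq => ?_
        exact Set.mk_mem_prod (hLmU j q.1 (Set.mem_prod.mp hq).1) (Set.mem_univ _)
      exact hsc.continuousOn.smul hvec
    have hO : IsOpen {q : (ℝ × E) × (ℕ → ℝ × E) | p.1.1 / 2 < q.1.1} :=
      isOpen_lt continuous_const (continuous_fst.fst)
    have hpO : p ∈ {q : (ℝ × E) × (ℕ → ℝ × E) | p.1.1 / 2 < q.1.1} := by
      simp only [Set.mem_setOf_eq]
      linarith
    refine (hFS p hp).congr_of_eventuallyEq ?_ ?_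
    · refine Filter.eventuallyEq_of_mem (mem_nhdsWithin_of_mem_nhds (hO.mem_nhds hpO)) ?_
      intro q hq
      exact hDDfin p.1 N hN q.1 hq ℓ q.2
    · exact hDDfin p.1 N hN p.1 (by linarith) ℓ p.2
  · -- vanishing on [-τ, ∞)
    intro t ht x
    have h0t : 0 < t := lt_of_lt_of_le (by linarith) ht
    have hz : ∀ j : ℕ, (c j * ϱ (-(2:ℝ)^j * t)) • f (-(2:ℝ)^j * t, x) = 0 := by
      intro j
      have h1 : (1:ℝ) ≤ 2 ^ j := one_le_pow₀ (by norm_num : (1:ℝ) ≤ 2)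
      have h2 : -(2:ℝ)^j * t ≤ τ := by nlinarith
      rw [hϱ0 _ h2, mul_zero, zero_smul]
    rw [tsum_congr hz, tsum_zero]
end

section
/- Let E, F be Hausdorff locally convex spaces, (V, V̄) with V ⊆ E nonempty open and V ⊆ V̄ ⊆ closure(V), −∞ ≤ a < c < d ≤ b < ∞, k ≥ 1, and f a Bastiani C^k map on (a,b)×V whose ℓ-th differentials extend continuously to maps ext^ℓf : (a,b]×V̄×(ℝ×E)^ℓ → F. Then for each continuous seminorm p on F, each 1 ≤ ℓ ≤ k, and each compact K ⊆ V̄, there exist C ≥ 1, a continuous seminorm q on E, and an open U ⊇ K in E such that p(ext^ℓf(z; w₁,…,w_ℓ)) ≤ C·∏_{i=1}^ℓ max(|λᵢ|, q(Xᵢ)) for all z ∈ [c,d]×(U ∩ V̄) and wᵢ = (λᵢ, Xᵢ) ∈ ℝ×E. -/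
open Filter Topology Set

/-!
On the open part `(a,b) × V` the differential `Df ℓ z` depends only on its first `ℓ`
arguments and is homogeneous in each of them: both facts pass from `ℓ` to `ℓ + 1` through the
difference quotients defining `Df (ℓ + 1)`. By density and continuity they persist for the
extension `Φ ℓ z` on `(a,b] × V'`, so `Φ ℓ z 0 = 0`. Continuity of `p ∘ Φ ℓ` along the compact
set `([c,d] × K) × {0}` and the tube lemma give an open `U ⊇ K`, a continuous seminorm `q` and
`ε > 0` with `p (Φ ℓ z w) < 1` whenever every `max |λᵢ| (q Xᵢ)` is below `ε`; rescaling each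
argument into that box yields the bound with `C = max 1 (ε⁻¹ ^ ℓ)`.
-/

namespace HasDirDeriv

variable {E F : Type*} [AddCommGroup E] [Module ℝ E] [TopologicalSpace E]
  [AddCommGroup F] [Module ℝ F] [TopologicalSpace F] {f g : E → F} {x v : E} {L L' : F}

theorem congr_of_eventuallyEq_s16 [ContinuousAdd E] [ContinuousSMul ℝ E]
    (hf : HasDirDeriv f x v L) (hfg : f =ᶠ[𝓝 x] g) : HasDirDeriv g x v L := by
  have hline : Tendsto (fun t : ℝ => x + t • v) (𝓝[≠] 0) (𝓝 x) := by
    have : Continuous fun t : ℝ => x + t • v := by fun_prop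
    simpa using (this.tendsto 0).mono_left nhdsWithin_le_nhds
  refine hf.congr' ?_
  filter_upwards [hline.eventually hfg] with t ht
  rw [ht, hfg.eq_of_nhds]

theorem unique [T2Space F] (hf : HasDirDeriv f x v L) (hf' : HasDirDeriv f x v L') : L = L' :=
  tendsto_nhds_unique hf hf'

theorem const_smul [ContinuousConstSMul ℝ F] (hf : HasDirDeriv f x v L) (c : ℝ) :
    HasDirDeriv (fun y => c • f y) x v (c • L) := by
  refine (Tendsto.const_smul hf c).congr fun t => ?_
  simp only [← smul_sub, smul_comm c]

theorem smul_dir [ContinuousConstSMul ℝ F] (hf : HasDirDeriv f x v L) (s : ℝ) :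
    HasDirDeriv f x (s • v) (s • L) := by
  rcases eq_or_ne s 0 with rfl | hs
  · simpa [HasDirDeriv] using tendsto_const_nhds
  have hmul : Tendsto (fun t : ℝ => s * t) (𝓝[≠] 0) (𝓝[≠] 0) := by
    refine tendsto_nhdsWithin_of_tendsto_nhds_of_eventually_within _ ?_ ?_
    · simpa using ((continuous_const_mul s).tendsto 0).mono_left nhdsWithin_le_nhds
    · filter_upwards [self_mem_nhdsWithin] with t ht using mul_ne_zero hs ht
  refine (Tendsto.const_smul (hf.comp hmul) s).congr fun t => ?_
  simp only [Function.comp_apply, mul_inv, smul_smul, mul_comm t s]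
  rw [← mul_assoc, mul_inv_cancel₀ hs, one_mul]

end HasDirDeriv

/-- Taking `c = 1` shows that `G` ignores all but its first `ℓ` arguments. -/
def IsMultiHomogeneous {X Y : Type*} [AddCommGroup X] [Module ℝ X] [AddCommGroup Y]
    [Module ℝ Y] (ℓ : ℕ) (G : (ℕ → X) → Y) : Prop :=
  ∀ (c : ℕ → ℝ) (w : ℕ → X),
    G (fun i => if i < ℓ then c i • w i else 0) = (∏ i ∈ Finset.range ℓ, c i) • G w

namespace IsMultiHomogeneous

variable {X Y : Type*} [AddCommGroup X] [Module ℝ X] [AddCommGroup Y] [Module ℝ Y] {ℓ : ℕ}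

theorem map_zero {G : (ℕ → X) → Y} (hG : IsMultiHomogeneous ℓ G) (hℓ : ℓ ≠ 0) : G 0 = 0 := by
  simpa [zero_pow hℓ, ← Pi.zero_def] using hG 0 0

theorem of_subset_closure {Z : Type*} [TopologicalSpace Z] [TopologicalSpace Y] [T2Space Y]
    [ContinuousConstSMul ℝ Y] {G : Z → (ℕ → X) → Y} {s t : Set Z}
    (hG : ∀ w, ContinuousOn (fun z => G z w) t) (hs : ∀ z ∈ s, IsMultiHomogeneous ℓ (G z))
    (hst : s ⊆ t) (hts : t ⊆ closure s) {z : Z} (hz : z ∈ t) : IsMultiHomogeneous ℓ (G z) :=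
  fun c w => EqOn.of_subset_closure (fun z' hz' => hs z' hz' c w) (hG _) ((hG w).const_smul _)
    hst hts hz

theorem le_prod {G : (ℕ → X) → Y} (hG : IsMultiHomogeneous ℓ G) (Q : Seminorm ℝ X)
    (p : Seminorm ℝ Y) {ε : ℝ} (hε : 0 < ε) (hbound : ∀ w, (∀ i, Q (w i) < ε) → p (G w) < 1)
    (w : ℕ → X) : p (G w) ≤ ε⁻¹ ^ ℓ * ∏ i ∈ Finset.range ℓ, Q (w i) := by
  have happrox : ∀ η > 0, p (G w) ≤ ε⁻¹ ^ ℓ * ∏ i ∈ Finset.range ℓ, (Q (w i) + η) := by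
    intro η hη
    -- `η` keeps the rescaling factors `c i` finite when some `Q (w i)` vanishes.
    have hpos : ∀ i, 0 < Q (w i) + η := fun i => add_pos_of_nonneg_of_pos (apply_nonneg _ _) hη
    set c : ℕ → ℝ := fun i => ε / (Q (w i) + η)
    have hc : ∀ i, 0 < c i := fun i => div_pos hε (hpos i)
    have hsmall : ∀ i, Q ((fun i => if i < ℓ then c i • w i else 0) i) < ε := by
      intro i
      dsimp only
      split_ifs
      · rw [map_smul_eq_mul, Real.norm_of_nonneg (hc i).le, div_mul_eq_mul_div,
          div_lt_iff₀ (hpos i)]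
        exact mul_lt_mul_of_pos_left (lt_add_of_pos_right _ hη) hε
      · simpa using hε
    have hlt := hbound _ hsmall
    rw [hG, map_smul_eq_mul, Real.norm_of_nonneg (Finset.prod_nonneg fun i _ => (hc i).le),
      ← lt_div_iff₀' (Finset.prod_pos fun i _ => hc i), one_div, ← Finset.prod_inv_distrib] at hlt
    refine hlt.le.trans_eq ?_
    have hc_inv : ∀ i, (c i)⁻¹ = ε⁻¹ * (Q (w i) + η) := fun i => by
      rw [inv_div, div_eq_inv_mul]
    simp only [hc_inv, Finset.prod_mul_distrib, Finset.prod_const, Finset.card_range]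
  have hcont : Continuous fun η : ℝ => ε⁻¹ ^ ℓ * ∏ i ∈ Finset.range ℓ, (Q (w i) + η) := by
    fun_prop
  have hlim := (hcont.tendsto 0).mono_left (nhdsWithin_le_nhds (s := Ioi 0))
  simpa using ge_of_tendsto hlim (eventually_nhdsWithin_of_forall happrox)

end IsMultiHomogeneous

namespace BastianiFamily

variable {E F : Type*} [AddCommGroup E] [Module ℝ E] [TopologicalSpace E] [ContinuousAdd E]
  [ContinuousSMul ℝ E] [AddCommGroup F] [Module ℝ F] [TopologicalSpace F] [T2Space F]
  {k : ℕ∞} {U : Set E} {f : E → F} {D : ℕ → E → (ℕ → E) → F}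

theorem apply_congr (hf : BastianiFamily k U f D) (hU : IsOpen U) {m : ℕ} (hm : (m : ℕ∞) ≤ k)
    {x : E} (hx : x ∈ U) {v v' : ℕ → E} (hvv' : ∀ i < m, v i = v' i) :
    D m x v = D m x v' := by
  induction m generalizing x with
  | zero => rw [hf.zeroth, hf.zeroth]
  | succ n ih =>
    have hn : (n : ℕ∞) < k := lt_of_lt_of_le (by exact_mod_cast n.lt_succ_self) hm
    have hv' := hf.deriv n hn x hx v'
    rw [← hvv' n n.lt_succ_self] at hv'
    have hnear : (fun y => D n y v) =ᶠ[𝓝 x] fun y => D n y v' :=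
      eventually_of_mem (hU.mem_nhds hx) fun y hy =>
        ih hn.le hy fun i hi => hvv' i (hi.trans n.lt_succ_self)
    exact ((hf.deriv n hn x hx v).congr_of_eventuallyEq_s16 hnear).unique hv'

variable [ContinuousConstSMul ℝ F]

theorem apply_update_smul (hf : BastianiFamily k U f D) (hU : IsOpen U) {m : ℕ}
    (hm : (m : ℕ∞) ≤ k) {i : ℕ} (hi : i < m) {x : E} (hx : x ∈ U) (v : ℕ → E) (s : ℝ) :
    D m x (Function.update v i (s • v i)) = s • D m x v := by
  induction m generalizing x with
  | zero => exact absurd hi (Nat.not_lt_zero i)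
  | succ n ih =>
    have hn : (n : ℕ∞) < k := lt_of_lt_of_le (by exact_mod_cast n.lt_succ_self) hm
    have hderiv := hf.deriv n hn x hx (Function.update v i (s • v i))
    rcases Nat.lt_succ_iff_lt_or_eq.1 hi with hin | rfl
    · rw [Function.update_of_ne hin.ne'] at hderiv
      refine (hderiv.congr_of_eventuallyEq_s16 ?_).unique ((hf.deriv n hn x hx v).const_smul s)
      exact eventually_of_mem (hU.mem_nhds hx) fun y hy => ih hn.le hin hy
    · rw [Function.update_self] at hderiv
      refine (hderiv.congr_of_eventuallyEq_s16 ?_).unique ((hf.deriv i hn x hx v).smul_dir s)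
      exact eventually_of_mem (hU.mem_nhds hx) fun y hy =>
        hf.apply_congr hU hn.le hy fun j hj => Function.update_of_ne hj.ne _ _

theorem isMultiHomogeneous (hf : BastianiFamily k U f D) (hU : IsOpen U) {ℓ : ℕ}
    (hℓ : (ℓ : ℕ∞) ≤ k) {x : E} (hx : x ∈ U) : IsMultiHomogeneous ℓ (D ℓ x) := by
  intro c w
  have hscaled : ∀ j ≤ ℓ, D ℓ x (fun i => if i < j then c i • w i else w i) =
      (∏ i ∈ Finset.range j, c i) • D ℓ x w := by
    intro j hj
    induction j with
    | zero => simp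
    | succ n ih =>
      have hupdate : (fun i => if i < n + 1 then c i • w i else w i) =
          Function.update (fun i => if i < n then c i • w i else w i) n (c n • w n) := by
        ext i : 1
        rcases lt_trichotomy i n with h | rfl | h
        · simp [h, h.ne, Nat.lt_succ_of_lt h]
        · simp
        · simp [h.ne', h.not_gt, (Nat.succ_le_of_lt h).not_gt]
      have hwn : c n • w n = c n • (fun i => if i < n then c i • w i else w i) n := by simp
      rw [hupdate, hwn, hf.apply_update_smul hU hℓ hj hx, ih (by omega),
        Finset.prod_range_succ, smul_smul, mul_comm]
  rw [← hscaled ℓ le_rfl]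
  exact hf.apply_congr hU hℓ hx fun i hi => by simp [hi]

theorem isMultiHomogeneous_of_extension (hf : BastianiFamily k U f D) (hU : IsOpen U) {ℓ : ℕ}
    (hℓ : (ℓ : ℕ∞) ≤ k) {U' : Set E} {Φ : E → (ℕ → E) → F}
    (hΦ : ContinuousOn (fun p : E × (ℕ → E) => Φ p.1 p.2) (U' ×ˢ univ)) (hUU' : U ⊆ U')
    (hU' : U' ⊆ closure U) (hΦD : ∀ x ∈ U, ∀ w, Φ x w = D ℓ x w) :
    ∀ x ∈ U', IsMultiHomogeneous ℓ (Φ x) := by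
  have hslice : ∀ w, ContinuousOn (fun x => Φ x w) U' := fun w =>
    hΦ.comp (continuous_id.prodMk (continuous_const (y := w))).continuousOn
      fun x hx => ⟨hx, mem_univ w⟩
  exact fun x => IsMultiHomogeneous.of_subset_closure hslice
    (fun y hy => funext (hΦD y hy) ▸ hf.isMultiHomogeneous hU hℓ hy) hUU' hU'

end BastianiFamily

theorem ContinuousOn.exists_tube_mapsTo {X Y Z : Type*} [TopologicalSpace X]
    [TopologicalSpace Y] [TopologicalSpace Z] {g : X × Y → Z} {D A : Set X} {y₀ : Y} {s : Set Z}
    (hg : ContinuousOn g (D ×ˢ univ)) (hA : IsCompact A) (hAD : A ⊆ D) (hs : IsOpen s)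
    (hA_s : ∀ x ∈ A, g (x, y₀) ∈ s) :
    ∃ O : Set X, IsOpen O ∧ A ⊆ O ∧ ∃ N ∈ 𝓝 y₀, MapsTo g ((O ∩ D) ×ˢ N) s := by
  obtain ⟨W, hW, hgW⟩ := continuousOn_iff'.1 hg s hs
  have hAW : A ×ˢ {y₀} ⊆ W := by
    rintro ⟨x, y⟩ ⟨hx, rfl⟩
    have : (x, y) ∈ g ⁻¹' s ∩ D ×ˢ univ := ⟨hA_s x hx, hAD hx, mem_univ _⟩
    rw [hgW] at this
    exact this.1
  obtain ⟨O, N, hO, hN, hAO, hy₀N, hON⟩ := generalized_tube_lemma hA isCompact_singleton hW hAW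
  refine ⟨O, hO, hAO, N, hN.mem_nhds (hy₀N rfl), ?_⟩
  rintro ⟨x, y⟩ ⟨⟨hxO, hxD⟩, hyN⟩
  have : (x, y) ∈ W ∩ D ×ˢ univ := ⟨hON ⟨hxO, hyN⟩, hxD, mem_univ _⟩
  rw [← hgW] at this
  exact this.1

theorem exists_mem_nhds_pi_univ_subset {ι Y : Type*} [TopologicalSpace Y] {y : Y}
    {N : Set (ι → Y)} (hN : N ∈ 𝓝 fun _ => y) : ∃ s ∈ 𝓝 y, univ.pi (fun _ => s) ⊆ N := by
  obtain ⟨I, t, ht, hIt⟩ := Filter.mem_pi'.1 (nhds_pi (a := fun _ => y) ▸ hN)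
  refine ⟨⋂ i ∈ I, t i, (Filter.biInter_finset_mem I).2 fun i _ => ht i, fun w hw => hIt ?_⟩
  exact fun i hi => mem_iInter₂.1 (hw i (mem_univ i)) i hi

def Seminorm.prod {𝕜 E₁ E₂ : Type*} [SeminormedRing 𝕜] [AddCommGroup E₁] [Module 𝕜 E₁]
    [AddCommGroup E₂] [Module 𝕜 E₂] (p₁ : Seminorm 𝕜 E₁) (p₂ : Seminorm 𝕜 E₂) :
    Seminorm 𝕜 (E₁ × E₂) :=
  p₁.comp (LinearMap.fst 𝕜 E₁ E₂) ⊔ p₂.comp (LinearMap.snd 𝕜 E₁ E₂)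

theorem Seminorm.prod_apply {𝕜 E₁ E₂ : Type*} [SeminormedRing 𝕜] [AddCommGroup E₁]
    [Module 𝕜 E₁] [AddCommGroup E₂] [Module 𝕜 E₂] (p₁ : Seminorm 𝕜 E₁) (p₂ : Seminorm 𝕜 E₂)
    (x : E₁ × E₂) :
    p₁.prod p₂ x = max (p₁ x.1) (p₂ x.2) :=
  rfl

theorem exists_seminorm_ball_subset {E : Type*} [AddCommGroup E] [Module ℝ E]
    [TopologicalSpace E] [IsTopologicalAddGroup E] [ContinuousSMul ℝ E] [LocallyConvexSpace ℝ E]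
    {s : Set E} (hs : s ∈ 𝓝 0) :
    ∃ q : Seminorm ℝ E, Continuous q ∧ ∃ ε > 0, q.ball 0 ε ⊆ s := by
  have hbasis := (with_gaugeSeminormFamily (𝕜 := ℝ) (E := E)).hasBasis_zero_ball
  obtain ⟨⟨I, ε⟩, hε, hball⟩ := hbasis.mem_iff.1 hs
  exact ⟨_, Seminorm.continuous (hbasis.mem_of_mem hε), ε, hε, hball⟩

theorem exists_seminorm_prod_ball_subset {E : Type*} [AddCommGroup E] [Module ℝ E]
    [TopologicalSpace E] [IsTopologicalAddGroup E] [ContinuousSMul ℝ E] [LocallyConvexSpace ℝ E]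
    {s : Set (ℝ × E)} (hs : s ∈ 𝓝 0) :
    ∃ q : Seminorm ℝ E, Continuous q ∧ ∃ ε > 0, ((normSeminorm ℝ ℝ).prod q).ball 0 ε ⊆ s := by
  obtain ⟨u, hu, v, hv, huv⟩ := mem_nhds_prod_iff.1 hs
  obtain ⟨ε₁, hε₁, hball⟩ := Metric.mem_nhds_iff.1 hu
  obtain ⟨q, hq, ε₂, hε₂, hqball⟩ := exists_seminorm_ball_subset hv
  refine ⟨q, hq, min ε₁ ε₂, lt_min hε₁ hε₂, fun y hy => huv ⟨hball ?_, hqball ?_⟩⟩ <;>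
    rw [Seminorm.mem_ball_zero, Seminorm.prod_apply, max_lt_iff, lt_min_iff, lt_min_iff] at hy
  · simpa using hy.1.1
  · simpa [Seminorm.mem_ball_zero] using hy.2.2

theorem setOf_lt_le_subset_closure_setOf_lt_lt {a : EReal} {b : ℝ} (hab : a < b) :
    {t : ℝ | a < t ∧ t ≤ b} ⊆ closure {t : ℝ | a < t ∧ t < b} := by
  rintro t ⟨hat, htb⟩
  rcases htb.lt_or_eq with htb | rfl
  · exact subset_closure ⟨hat, htb⟩
  obtain ⟨c, hac, hcb⟩ := EReal.exists_between_coe_real hab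
  have hct : c < t := EReal.coe_lt_coe_iff.1 hcb
  have hIoo : Ioo c t ⊆ {r : ℝ | a < r ∧ r < t} := fun r hr =>
    ⟨hac.trans (EReal.coe_lt_coe_iff.2 hr.1), hr.2⟩
  refine closure_mono hIoo ?_
  rw [closure_Ioo hct.ne]
  exact right_mem_Icc.2 hct.le

theorem extended_differential_product_bound_general
    {E F : Type*}
    [AddCommGroup E] [Module ℝ E] [TopologicalSpace E] [IsTopologicalAddGroup E]
    [ContinuousSMul ℝ E] [LocallyConvexSpace ℝ E]
    [AddCommGroup F] [Module ℝ F] [TopologicalSpace F]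
    [ContinuousSMul ℝ F] [T2Space F]
    (k : ℕ∞) {V V' : Set E} (hV : IsOpen V)
    (hVV' : V ⊆ V') (hV'cl : V' ⊆ closure V)
    (a : EReal) (b c d : ℝ) (hac : a < (c : EReal)) (hcd : c < d) (hdb : d ≤ b)
    (f : ℝ × E → F) (Df : ℕ → (ℝ × E) → (ℕ → ℝ × E) → F)
    (hf : BastianiFamily k ({t : ℝ | a < (t : EReal) ∧ t < b} ×ˢ V) f Df)
    (Φ : ℕ → (ℝ × E) → (ℕ → ℝ × E) → F)
    (hΦcont : ∀ ℓ : ℕ, (ℓ : ℕ∞) ≤ k →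
      ContinuousOn (fun p : (ℝ × E) × (ℕ → ℝ × E) => Φ ℓ p.1 p.2)
        (({t : ℝ | a < (t : EReal) ∧ t ≤ b} ×ˢ V') ×ˢ univ))
    (hΦ : ∀ ℓ : ℕ, (ℓ : ℕ∞) ≤ k →
      ∀ z ∈ {t : ℝ | a < (t : EReal) ∧ t < b} ×ˢ V, ∀ w, Φ ℓ z w = Df ℓ z w)
    (p : Seminorm ℝ F) (hp : Continuous p)
    (ℓ : ℕ) (hℓ : 1 ≤ ℓ) (hℓk : (ℓ : ℕ∞) ≤ k)
    (K : Set E) (hK : IsCompact K) (hKV' : K ⊆ V') :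
    ∃ C : ℝ, 1 ≤ C ∧ ∃ q : Seminorm ℝ E, Continuous q ∧ ∃ U : Set E, IsOpen U ∧ K ⊆ U ∧
      ∀ t ∈ Icc c d, ∀ x ∈ U ∩ V', ∀ w : ℕ → ℝ × E,
        p (Φ ℓ (t, x) w) ≤ C * ∏ i ∈ Finset.range ℓ, max |(w i).1| (q (w i).2) := by
  set S : Set ℝ := {t | a < (t : EReal) ∧ t < b}
  set T : Set ℝ := {t | a < (t : EReal) ∧ t ≤ b}
  have hS : IsOpen S :=
    (isOpen_lt continuous_const continuous_coe_real_ereal).inter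
      (isOpen_lt continuous_id continuous_const)
  have hTS : T ⊆ closure S := setOf_lt_le_subset_closure_setOf_lt_lt
    (hac.trans (EReal.coe_lt_coe_iff.2 (hcd.trans_le hdb)))
  have hhom : ∀ z ∈ T ×ˢ V', IsMultiHomogeneous ℓ (Φ ℓ z) :=
    hf.isMultiHomogeneous_of_extension (hS.prod hV) hℓk (hΦcont ℓ hℓk)
      (prod_mono (fun t ht => ⟨ht.1, ht.2.le⟩) hVV')
      (closure_prod_eq (s := S) (t := V) ▸ prod_mono hTS hV'cl) (hΦ ℓ hℓk)
  have hIccT : Icc c d ⊆ T := fun t ht =>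
    ⟨hac.trans_le (EReal.coe_le_coe_iff.2 ht.1), ht.2.trans hdb⟩
  obtain ⟨O, hO, hKO, N, hN, hON⟩ := (hp.comp_continuousOn (hΦcont ℓ hℓk)).exists_tube_mapsTo
    (isCompact_Icc.prod hK) (prod_mono hIccT hKV') isOpen_Iio (y₀ := 0) (s := Iio 1)
    fun z hz => by simp [(hhom z (prod_mono hIccT hKV' hz)).map_zero (by omega)]
  obtain ⟨I, U, -, hU, hIcc, hKU, hIU⟩ := generalized_tube_lemma isCompact_Icc hK hO hKO
  obtain ⟨s, hs, hsN⟩ := exists_mem_nhds_pi_univ_subset hN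
  obtain ⟨q, hq, ε, hε, hqs⟩ := exists_seminorm_prod_ball_subset hs
  refine ⟨max 1 (ε⁻¹ ^ ℓ), le_max_left _ _, q, hq, U, hU, hKU, fun t ht x hx w => ?_⟩
  have hbound := (hhom (t, x) ⟨hIccT ht, hx.2⟩).le_prod ((normSeminorm ℝ ℝ).prod q) p hε
    (fun w hw => hON (x := ((t, x), w)) ⟨⟨hIU ⟨hIcc ht, hx.1⟩, hIccT ht, hx.2⟩,
      hsN fun i _ => hqs ((Seminorm.mem_ball_zero _).2 (hw i))⟩) w
  simp only [Seminorm.prod_apply, coe_normSeminorm, Real.norm_eq_abs] at hbound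
  exact hbound.trans (mul_le_mul_of_nonneg_right (le_max_right _ _)
    (Finset.prod_nonneg fun i _ => le_max_of_le_left (abs_nonneg _)))

/-- Uniform product estimate for extended differentials: let `−∞ ≤ a < c < d ≤ b < ∞`,
`V ⊆ E` open nonempty, `V ⊆ V' ⊆ closure V`, and `f` Bastiani `C^k` on `(a,b) × V` with
continuous extensions `Φ ℓ` of `d^ℓ f` to `(a,b] × V'`. Then for every continuous seminorm
`p` on `F`, every `1 ≤ ℓ ≤ k` and compact `K ⊆ V'`, there are `C ≥ 1`, a continuous
seminorm `q` on `E` and an open `U ⊇ K` such that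
`p(Φ ℓ (z; w₁,…,w_ℓ)) ≤ C · ∏ᵢ max(|λᵢ|, q(Xᵢ))` for all `z ∈ [c,d] × (U ∩ V')` and
`wᵢ = (λᵢ, Xᵢ) ∈ ℝ × E`. -/
theorem extended_differential_product_bound
    {E F : Type*}
    [AddCommGroup E] [Module ℝ E] [TopologicalSpace E] [IsTopologicalAddGroup E]
    [ContinuousSMul ℝ E] [LocallyConvexSpace ℝ E] [T2Space E]
    [AddCommGroup F] [Module ℝ F] [TopologicalSpace F] [IsTopologicalAddGroup F]
    [ContinuousSMul ℝ F] [LocallyConvexSpace ℝ F] [T2Space F]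
    (k : ℕ∞) {V V' : Set E} (hV : IsOpen V) (hVne : V.Nonempty)
    (hVV' : V ⊆ V') (hV'cl : V' ⊆ closure V)
    (a : EReal) (b c d : ℝ) (hac : a < (c : EReal)) (hcd : c < d) (hdb : d ≤ b)
    (f : ℝ × E → F) (Df : ℕ → (ℝ × E) → (ℕ → ℝ × E) → F)
    (hf : BastianiFamily k ({t : ℝ | a < (t : EReal) ∧ t < b} ×ˢ V) f Df)
    (Φ : ℕ → (ℝ × E) → (ℕ → ℝ × E) → F)
    (hΦcont : ∀ ℓ : ℕ, (ℓ : ℕ∞) ≤ k →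
      ContinuousOn (fun p : (ℝ × E) × (ℕ → ℝ × E) => Φ ℓ p.1 p.2)
        (({t : ℝ | a < (t : EReal) ∧ t ≤ b} ×ˢ V') ×ˢ univ))
    (hΦ : ∀ ℓ : ℕ, (ℓ : ℕ∞) ≤ k →
      ∀ z ∈ {t : ℝ | a < (t : EReal) ∧ t < b} ×ˢ V, ∀ w, Φ ℓ z w = Df ℓ z w)
    (p : Seminorm ℝ F) (hp : Continuous p)
    (ℓ : ℕ) (hℓ : 1 ≤ ℓ) (hℓk : (ℓ : ℕ∞) ≤ k)
    (K : Set E) (hK : IsCompact K) (hKV' : K ⊆ V') :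
    ∃ C : ℝ, 1 ≤ C ∧ ∃ q : Seminorm ℝ E, Continuous q ∧ ∃ U : Set E, IsOpen U ∧ K ⊆ U ∧
      ∀ t ∈ Icc c d, ∀ x ∈ U ∩ V', ∀ w : ℕ → ℝ × E,
        p (Φ ℓ (t, x) w) ≤ C * ∏ i ∈ Finset.range ℓ, max |(w i).1| (q (w i).2) :=
  extended_differential_product_bound_general k hV hVV' hV'cl a b c d hac hcd hdb f Df hf Φ hΦcont
    hΦ p hp ℓ hℓ hℓk K hK hKV'
end
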